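/- arXiv:math/0211209 — 9 statements merged into one kernel-verified Lean document; each statement's English description precedes it below -/
import Mathlib

section
/- Let a < b be real numbers and let f : [a,b] → ℝ be a function that is left lower semicontinuous at every point of (a,b] and right-continuous at every point of [a,b), with f(a) ≤ 0. Assume that for every t ∈ [a,b) with f(t) ≥ 0 one has d⁺f(t) ≤ 0. Then f(t) ≤ 0 for all t ∈ [a,b]. -/
open Filter Set

/-- Upper forward derivative `d⁺f(t) = limsup_{s→0⁺} (f(t+s) − f(t))/s`, valued in `EReal`. -/
noncomputable def upperForwardDeriv (f : ℝ → ℝ) (t : ℝ) : EReal :=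
  Filter.limsup (fun s : ℝ => (((f (t + s) - f t) / s : ℝ) : EReal)) (nhdsWithin 0 (Set.Ioi 0))

/-- `f` is left lower semicontinuous at `t`: `liminf_{s→t⁻} f(s) ≥ f(t)`. -/
def LeftLowerSemicontinuousAt (f : ℝ → ℝ) (t : ℝ) : Prop :=
  ∀ ε > (0 : ℝ), ∀ᶠ s in nhdsWithin t (Set.Iio t), f t - ε < f s

/-- `f` is right-continuous at `t`: `lim_{s→t⁺} f(s) = f(t)`. -/
def RightContinuousAt (f : ℝ → ℝ) (t : ℝ) : Prop :=
  Filter.Tendsto f (nhdsWithin t (Set.Ioi t)) (nhds (f t))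

theorem stmt_0 (a b : ℝ) (hab : a < b) (f : ℝ → ℝ)
    (hlsc : ∀ t ∈ Set.Ioc a b, LeftLowerSemicontinuousAt f t)
    (hrc : ∀ t ∈ Set.Ico a b, RightContinuousAt f t)
    (hfa : f a ≤ 0)
    (hderiv : ∀ t ∈ Set.Ico a b, 0 ≤ f t → upperForwardDeriv f t ≤ (0 : EReal)) :
    ∀ t ∈ Set.Icc a b, f t ≤ 0 := by
  have key : ∀ ε : ℝ, 0 < ε → ∀ t ∈ Set.Icc a b, f t ≤ ε * (t - a) := by
    intro ε hε
    set S : Set ℝ := {t | t ∈ Set.Icc a b ∧ ∀ s ∈ Set.Icc a t, f s ≤ ε * (s - a)} with hS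
    have haS : a ∈ S := by
      refine ⟨⟨le_refl a, hab.le⟩, ?_⟩
      intro s hs
      have hsa : s = a := le_antisymm hs.2 hs.1
      rw [hsa]
      simpa using hfa
    have hbdd : BddAbove S := ⟨b, fun t ht => ht.1.2⟩
    have hne : S.Nonempty := ⟨a, haS⟩
    set c := sSup S with hc
    have hac : a ≤ c := le_csSup hbdd haS
    have hcb : c ≤ b := csSup_le hne (fun t ht => ht.1.2)
    have hbelow : ∀ s ∈ Set.Ico a c, f s ≤ ε * (s - a) := by
      intro s hs
      obtain ⟨t, htS, hst⟩ := exists_lt_of_lt_csSup hne hs.2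
      exact htS.2 s ⟨hs.1, hst.le⟩
    have hfc : f c ≤ ε * (c - a) := by
      rcases eq_or_lt_of_le hac with h | h
      · rw [← h]; simpa using hfa
      · by_contra hcon
        push_neg at hcon
        have hδpos : 0 < f c - ε * (c - a) := by linarith
        have h1 := hlsc c ⟨h, hcb⟩ _ hδpos
        have h2 : ∀ᶠ s in nhdsWithin c (Set.Iio c), a < s :=
          eventually_nhdsWithin_of_eventually_nhds (eventually_gt_nhds h)
        have h3 : ∀ᶠ s in nhdsWithin c (Set.Iio c), s < c :=
          eventually_mem_nhdsWithin
        obtain ⟨s, ⟨hfs, has⟩, hsc⟩ := ((h1.and h2).and h3).exists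
        have hfse : f s ≤ ε * (s - a) := hbelow s ⟨has.le, hsc⟩
        nlinarith
    have hcS : c ∈ S := by
      refine ⟨⟨hac, hcb⟩, ?_⟩
      intro s hs
      rcases eq_or_lt_of_le hs.2 with h | h
      · rw [h]; exact hfc
      · exact hbelow s ⟨hs.1, h⟩
    have hcb' : c = b := by
      by_contra hne'
      have hclt : c < b := lt_of_le_of_ne hcb hne'
      have hge : ∃ t, c < t ∧ t ∈ S := by
        rcases lt_or_ge (f c) 0 with hneg | hpos
        · -- right-continuity case
          have hev : ∀ᶠ s in nhdsWithin c (Set.Ioi c), f s < 0 :=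
            (hrc c ⟨hac, hclt⟩).eventually_lt_const hneg
          rw [eventually_iff, mem_nhdsGT_iff_exists_Ioc_subset] at hev
          obtain ⟨u, hu, hsub⟩ := hev
          refine ⟨min u b, lt_min hu hclt, ⟨⟨hac.trans (lt_min hu hclt).le, min_le_right _ _⟩, ?_⟩⟩
          intro s hs
          rcases le_or_gt s c with h | h
          · exact hcS.2 s ⟨hs.1, h⟩
          · have hsu : s ≤ u := hs.2.trans (min_le_left _ _)
            have : f s < 0 := hsub ⟨h, hsu⟩
            nlinarith [hac.trans_lt h]
        · -- derivative case
          have hlt : Filter.limsup (fun s : ℝ => (((f (c + s) - f c) / s : ℝ) : EReal))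
              (nhdsWithin 0 (Set.Ioi 0)) < (ε : EReal) := by
            refine lt_of_le_of_lt (hderiv c ⟨hac, hclt⟩ hpos) ?_
            exact_mod_cast hε
          have hev := Filter.eventually_lt_of_limsup_lt hlt
          have hev' : ∀ᶠ s in nhdsWithin 0 (Set.Ioi (0:ℝ)), (f (c + s) - f c) / s < ε := by
            filter_upwards [hev] with s hs
            exact_mod_cast hs
          rw [eventually_iff, mem_nhdsGT_iff_exists_Ioc_subset] at hev'
          obtain ⟨u, hu, hsub⟩ := hev'
          have hu' : (0:ℝ) < u := hu
          refine ⟨min (c + u) b, lt_min (by linarith) hclt, ⟨⟨hac.trans (lt_min (by linarith) hclt).le, min_le_right _ _⟩, ?_⟩⟩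
          intro s hs
          rcases le_or_gt s c with h | h
          · exact hcS.2 s ⟨hs.1, h⟩
          · have hsu : s ≤ c + u := hs.2.trans (min_le_left _ _)
            have hmem : s - c ∈ Set.Ioc (0:ℝ) u := ⟨by linarith, by linarith⟩
            have hq := hsub hmem
            have hpos' : (0:ℝ) < s - c := hmem.1
            rw [Set.mem_setOf_eq, div_lt_iff₀ hpos'] at hq
            have hrw : c + (s - c) = s := by ring
            rw [hrw] at hq
            nlinarith
      obtain ⟨t, hct, htS⟩ := hge
      exact absurd (le_csSup hbdd htS) (not_le.mpr hct)
    intro t ht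
    have := hcS.2
    rw [hcb'] at this
    exact this t ht
  intro t ht
  rcases eq_or_lt_of_le ht.1 with h | h
  · rw [← h]; exact hfa
  · by_contra hpos
    push_neg at hpos
    have hta : 0 < t - a := by linarith
    have hεpos : 0 < f t / (2 * (t - a)) := by positivity
    have := key _ hεpos t ht
    rw [div_mul_eq_mul_div, mul_comm] at this
    have h2 : (t - a) * f t / (2 * (t - a)) = f t / 2 := by
      field_simp
    rw [h2] at this
    linarith
end

section
/- Let a < b be real numbers and let f : [a,b] → ℝ be a function that is left lower semicontinuous at every point of (a,b] and right-continuous at every point of [a,b), with f(a) ≤ 0. Assume that for every t ∈ (a,b) with f(t) ≥ 0 one has d⁺f(t) ≤ 0 (the hypothesis is not required at the left endpoint a). Then f(t) ≤ 0 for all t ∈ [a,b]. -/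
open Filter Set

theorem stmt_1 (a b : ℝ) (hab : a < b) (f : ℝ → ℝ)
    (hlsc : ∀ t ∈ Set.Ioc a b, LeftLowerSemicontinuousAt f t)
    (hrc : ∀ t ∈ Set.Ico a b, RightContinuousAt f t)
    (hfa : f a ≤ 0)
    (hderiv : ∀ t ∈ Set.Ioo a b, 0 ≤ f t → upperForwardDeriv f t ≤ (0 : EReal)) :
    ∀ t ∈ Set.Icc a b, f t ≤ 0 := by
  have key : ∀ ε > (0 : ℝ), ∀ t ∈ Icc a b, f t ≤ ε * (t - a + 1) := by
    intro ε hε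
    set S : Set ℝ := {t | t ∈ Icc a b ∧ ∀ s ∈ Icc a t, f s ≤ ε * (s - a + 1)} with hSdef
    have haS : a ∈ S := by
      refine ⟨⟨le_refl a, hab.le⟩, ?_⟩
      intro s hs
      have hsa : s = a := le_antisymm hs.2 hs.1
      subst hsa
      nlinarith
    have hbdd : BddAbove S := ⟨b, fun t ht => ht.1.2⟩
    set c := sSup S with hc
    have hac : a ≤ c := le_csSup hbdd haS
    have hcb : c ≤ b := csSup_le ⟨a, haS⟩ (fun t ht => ht.1.2)
    have claim1 : ∀ s ∈ Ico a c, f s ≤ ε * (s - a + 1) := by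
      intro s hs
      obtain ⟨t, htS, hst⟩ := exists_lt_of_lt_csSup ⟨a, haS⟩ hs.2
      exact htS.2 s ⟨hs.1, hst.le⟩
    have claim2 : f c ≤ ε * (c - a + 1) := by
      rcases eq_or_lt_of_le hac with h | h
      · rw [← h]; nlinarith
      · have hlsc' := hlsc c ⟨h, hcb⟩
        by_contra hcon
        push_neg at hcon
        set δ := f c - ε * (c - a + 1) with hδdef
        have hδ : 0 < δ := by linarith
        have h1 := hlsc' δ hδ
        have h2 : ∀ᶠ s in nhdsWithin c (Iio c), s ∈ Ioo a c :=
          Ioo_mem_nhdsLT_of_mem ⟨h, le_refl c⟩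
        obtain ⟨s, hfs, hs⟩ := (h1.and h2).exists
        have h3 : f s ≤ ε * (s - a + 1) := claim1 s ⟨hs.1.le, hs.2⟩
        nlinarith [hs.2]
    have hcS : c ∈ S := by
      refine ⟨⟨hac, hcb⟩, ?_⟩
      intro s hs
      rcases lt_or_eq_of_le hs.2 with h | h
      · exact claim1 s ⟨hs.1, h⟩
      · rw [h]; exact claim2
    have hceqb : c = b := by
      by_contra hcb'
      have hclt : c < b := lt_of_le_of_ne hcb hcb'
      have hsuff : ∃ δ > (0 : ℝ), ∀ s ∈ Ioc c (c + δ), f s ≤ ε * (s - a + 1) := by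
        by_cases hfc : f c < ε * (c - a + 1)
        · -- right continuity case
          have hrc' := hrc c ⟨hac, hclt⟩
          have hev : ∀ᶠ s in nhdsWithin c (Ioi c), f s < ε * (c - a + 1) :=
            hrc'.eventually (Filter.Tendsto.eventually_lt_const hfc tendsto_id)
          rw [eventually_iff, mem_nhdsGT_iff_exists_Ioc_subset] at hev
          obtain ⟨u, hu, hsub⟩ := hev
          refine ⟨u - c, by simpa using hu, ?_⟩
          intro s hs
          have hs' : s ∈ Ioc c u := by
            constructor
            · exact hs.1
            · linarith [hs.2]
          have := hsub hs'
          have hsc : c < s := hs.1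
          have : f s < ε * (c - a + 1) := this
          nlinarith
        · -- derivative case
          push_neg at hfc
          have hfc' : f c = ε * (c - a + 1) := le_antisymm claim2 hfc
          have hfcpos : 0 < f c := by nlinarith
          have hca : a < c := by
            rcases eq_or_lt_of_le hac with h | h
            · exfalso; rw [← h] at hfcpos; linarith
            · exact h
          have hd := hderiv c ⟨hca, hclt⟩ hfcpos.le
          have hlt : upperForwardDeriv f c < ((ε : ℝ) : EReal) := by
            refine lt_of_le_of_lt hd ?_
            exact_mod_cast EReal.coe_lt_coe_iff.mpr hε |>.trans_le (le_refl _)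
          have hev : ∀ᶠ s in nhdsWithin 0 (Ioi (0 : ℝ)),
              (((f (c + s) - f c) / s : ℝ) : EReal) < ((ε : ℝ) : EReal) :=
            Filter.eventually_lt_of_limsup_lt hlt
          have hev' : ∀ᶠ s in nhdsWithin 0 (Ioi (0 : ℝ)),
              (f (c + s) - f c) / s < ε := by
            filter_upwards [hev] with s hs
            exact_mod_cast hs
          rw [eventually_iff, mem_nhdsGT_iff_exists_Ioc_subset] at hev'
          obtain ⟨u, hu, hsub⟩ := hev'
          have hu0 : (0 : ℝ) < u := hu
          refine ⟨u, hu0, ?_⟩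
          intro s hs
          have hsc : c < s := hs.1
          have hmem : s - c ∈ Ioc (0 : ℝ) u := ⟨by linarith, by linarith [hs.2]⟩
          have := hsub hmem
          simp only [mem_setOf_eq] at this
          have hscpos : 0 < s - c := by linarith
          have h4 : f (c + (s - c)) - f c < ε * (s - c) := by
            have := (div_lt_iff₀ hscpos).mp this
            linarith
          have h5 : c + (s - c) = s := by ring
          rw [h5] at h4
          nlinarith
      obtain ⟨δ, hδ, hδprop⟩ := hsuff
      set u := min (c + δ) b with hu
      have hcu : c < u := lt_min (by linarith) hclt
      have huS : u ∈ S := by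
        refine ⟨⟨by linarith, min_le_right _ _⟩, ?_⟩
        intro s hs
        rcases le_or_gt s c with h | h
        · exact hcS.2 s ⟨hs.1, h⟩
        · refine hδprop s ⟨h, ?_⟩
          calc s ≤ u := hs.2
            _ ≤ c + δ := min_le_left _ _
      exact absurd (le_csSup hbdd huS) (not_le.mpr hcu)
    intro t ht
    rw [← hceqb] at *
    exact hcS.2 t ht
  intro t ht
  by_contra hcon
  push_neg at hcon
  have hta : 0 < t - a + 1 := by
    have := ht.1; linarith
  have hε : 0 < f t / (2 * (t - a + 1)) := by positivity
  have := key _ hε t ht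
  rw [div_mul_eq_mul_div] at this
  have heq : f t * (t - a + 1) / (2 * (t - a + 1)) = f t / 2 := by
    field_simp
  rw [heq] at this
  linarith
end

section
/- Let a < b be real numbers, let C be a real constant, and let f : [a,b] → ℝ be a function that is left lower semicontinuous at every point of (a,b] and right-continuous at every point of [a,b), with f(a) ≤ 0. Assume that for every t ∈ (a,b) with f(t) ≥ 0 one has d⁺f(t) ≤ C·f(t). Then f(t) ≤ 0 for all t ∈ [a,b]. -/
open Filter Set

theorem stmt_2 (a b : ℝ) (C : ℝ) (hab : a < b) (f : ℝ → ℝ)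
    (hlsc : ∀ t ∈ Set.Ioc a b, LeftLowerSemicontinuousAt f t)
    (hrc : ∀ t ∈ Set.Ico a b, RightContinuousAt f t)
    (hfa : f a ≤ 0)
    (hderiv : ∀ t ∈ Set.Ioo a b, 0 ≤ f t → upperForwardDeriv f t ≤ ((C * f t : ℝ) : EReal)) :
    ∀ t ∈ Set.Icc a b, f t ≤ 0 := by
  have key : ∀ ε > (0:ℝ), ∀ t ∈ Set.Icc a b, f t ≤ ε * Real.exp ((C+1) * (t - a)) := by
    intro ε hε
    set K := C + 1 with hK
    set g : ℝ → ℝ := fun t => ε * Real.exp (K * (t - a)) with hg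
    have hgpos : ∀ t, 0 < g t := fun t => mul_pos hε (Real.exp_pos _)
    have hgcont : Continuous g := by
      apply continuous_const.mul
      exact Real.continuous_exp.comp (by continuity)
    by_contra hcon
    push_neg at hcon
    obtain ⟨t1, ht1, hgt1⟩ := hcon
    set A : Set ℝ := {t | t ∈ Set.Icc a b ∧ g t < f t} with hA
    have hAne : A.Nonempty := ⟨t1, ht1, hgt1⟩
    have hAbdd : BddBelow A := ⟨a, fun x hx => hx.1.1⟩
    set t0 := sInf A with ht0def
    have ht0a : a ≤ t0 := le_csInf hAne fun x hx => hx.1.1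
    have ht0b : t0 ≤ b := by
      obtain ⟨x, hx⟩ := hAne
      exact le_trans (csInf_le hAbdd hx) hx.1.2
    have hbefore : ∀ s, a ≤ s → s < t0 → f s ≤ g s := by
      intro s hs hst
      by_contra hfs
      push_neg at hfs
      have : s ∈ A := ⟨⟨hs, le_trans hst.le ht0b⟩, hfs⟩
      exact absurd (csInf_le hAbdd this) (not_le.mpr hst)
    -- f t0 ≤ g t0
    have hft0 : f t0 ≤ g t0 := by
      rcases eq_or_lt_of_le ht0a with h | h
      · rw [← h]; exact le_of_lt (lt_of_le_of_lt hfa (hgpos a))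
      · by_contra hlt
        push_neg at hlt
        set ε' := (f t0 - g t0) / 2 with hε'
        have hε'pos : 0 < ε' := by simp [hε']; linarith
        have E1 : ∀ᶠ s in nhdsWithin t0 (Set.Iio t0), f t0 - ε' < f s :=
          hlsc t0 ⟨h, ht0b⟩ ε' hε'pos
        have E2 : ∀ᶠ s in nhdsWithin t0 (Set.Iio t0), g s < g t0 + ε' := by
          have : Tendsto g (nhdsWithin t0 (Set.Iio t0)) (nhds (g t0)) :=
            (hgcont.tendsto t0).mono_left nhdsWithin_le_nhds
          exact this.eventually_lt_const (by linarith)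
        have E3 : ∀ᶠ s in nhdsWithin t0 (Set.Iio t0), a < s := by
          apply eventually_nhdsWithin_of_eventually_nhds
          exact eventually_gt_nhds h
        have E4 : ∀ᶠ s in nhdsWithin t0 (Set.Iio t0), s < t0 :=
          eventually_mem_nhdsWithin.mono fun s hs => hs
        obtain ⟨s, h1, h2, h3, h4⟩ := (E1.and (E2.and (E3.and E4))).exists
        have := hbefore s h3.le h4
        have : f t0 - ε' < g t0 + ε' := by linarith
        simp [hε'] at this; linarith
    rcases eq_or_lt_of_le ht0b with heq | hlt
    · -- t0 = b : A = {b}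
      obtain ⟨x, hx⟩ := hAne
      have hxe : x = b := le_antisymm hx.1.2 (heq ▸ csInf_le hAbdd hx)
      have : g b < f b := hxe ▸ hx.2
      rw [heq] at hft0
      linarith
    · -- t0 < b
      have hkey : ∃ u, t0 < u ∧ ∀ s, t0 < s → s < u → f s < g s := by
        rcases eq_or_lt_of_le hft0 with heq2 | hlt2
        · -- f t0 = g t0 > 0 : use derivative bound
          have ht0a' : a < t0 := by
            rcases eq_or_lt_of_le ht0a with h | h
            · exfalso; rw [← h] at heq2; have := hgpos a; linarith
            · exact h
          have hpos : 0 < f t0 := heq2 ▸ hgpos t0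
          have hd := hderiv t0 ⟨ht0a', hlt⟩ hpos.le
          have hlt3 : upperForwardDeriv f t0 < ((K * g t0 : ℝ) : EReal) := by
            apply lt_of_le_of_lt hd
            rw [EReal.coe_lt_coe_iff]
            rw [heq2, hK]
            have := hgpos t0
            nlinarith
          have hev : ∀ᶠ s in nhdsWithin 0 (Set.Ioi 0),
              (((f (t0 + s) - f t0) / s : ℝ) : EReal) < ((K * g t0 : ℝ) : EReal) :=
            Filter.eventually_lt_of_limsup_lt hlt3
          have hev' : ∀ᶠ s in nhdsWithin 0 (Set.Ioi 0),
              (f (t0 + s) - f t0) / s < K * g t0 := by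
            filter_upwards [hev] with s hs
            exact_mod_cast hs
          rw [Filter.eventually_iff, mem_nhdsGT_iff_exists_Ioo_subset] at hev'
          obtain ⟨u, hu, hsub⟩ := hev'
          refine ⟨t0 + u, by linarith [mem_Ioi.mp hu], fun s hs1 hs2 => ?_⟩
          have hmem : s - t0 ∈ Set.Ioo (0:ℝ) u := ⟨by linarith, by linarith⟩
          have hq := hsub hmem
          simp only [Set.mem_setOf_eq] at hq
          have hst : t0 + (s - t0) = s := by ring
          rw [hst] at hq
          have hspos : 0 < s - t0 := by linarith
          have h1 : f s < f t0 + (s - t0) * (K * g t0) := by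
            have := (div_lt_iff₀ hspos).mp hq
            linarith [mul_comm (s - t0) (K * g t0)]
          have h2 : g t0 * (1 + K * (s - t0)) ≤ g s := by
            have hexp : 1 + K * (s - t0) ≤ Real.exp (K * (s - t0)) := by
              linarith [Real.add_one_le_exp (K * (s - t0))]
            have hgs : g s = g t0 * Real.exp (K * (s - t0)) := by
              simp only [hg]
              rw [mul_assoc, ← Real.exp_add]
              ring_nf
            rw [hgs]
            exact mul_le_mul_of_nonneg_left hexp (hgpos t0).le
          nlinarith [h1, h2, heq2]
        · -- f t0 < g t0 : use right continuity
          have hrc' := hrc t0 ⟨ht0a, hlt⟩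
          set m := (f t0 + g t0) / 2 with hm
          have E1 : ∀ᶠ s in nhdsWithin t0 (Set.Ioi t0), f s < m :=
            hrc'.eventually_lt_const (by simp [hm]; linarith)
          have E2 : ∀ᶠ s in nhdsWithin t0 (Set.Ioi t0), m < g s := by
            have : Tendsto g (nhdsWithin t0 (Set.Ioi t0)) (nhds (g t0)) :=
              (hgcont.tendsto t0).mono_left nhdsWithin_le_nhds
            exact this.eventually_const_lt (by simp [hm]; linarith)
          have E := E1.and E2
          rw [Filter.eventually_iff, mem_nhdsGT_iff_exists_Ioo_subset] at E
          obtain ⟨u, hu, hsub⟩ := E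
          refine ⟨u, mem_Ioi.mp hu, fun s hs1 hs2 => ?_⟩
          have := hsub ⟨hs1, hs2⟩
          simp only [Set.mem_setOf_eq] at this
          linarith [this.1, this.2]
      obtain ⟨u, hu, hfu⟩ := hkey
      obtain ⟨x, hxA, hxlt⟩ := Real.lt_sInf_add_pos hAne (show (0:ℝ) < u - t0 by linarith)
      have hxge : t0 ≤ x := csInf_le hAbdd hxA
      have hxne : t0 < x := by
        rcases eq_or_lt_of_le hxge with h | h
        · exfalso; rw [← h] at hxA; exact absurd hxA.2 (not_lt.mpr hft0)
        · exact h
      have : f x < g x := hfu x hxne (by linarith)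
      exact absurd hxA.2 (not_lt.mpr (le_of_lt this))
  intro t ht
  by_contra hpos
  push_neg at hpos
  set c := Real.exp ((C+1) * (t - a)) with hc
  have hcpos : 0 < c := Real.exp_pos _
  have := key (f t / (2 * c)) (by positivity) t ht
  rw [div_mul_eq_mul_div, mul_comm] at this
  have h2 : c * f t / (2 * c) = f t / 2 := by field_simp
  rw [h2] at this
  linarith
end

section
/- Let S be a nonempty sequentially compact topological space and let g : S × [a,b] → ℝ be a function that is jointly continuous in (s,t) and whose partial derivative ∂g/∂t exists at every point and is jointly continuous in (s,t). Then the function f : [a,b] → ℝ defined by f(t) = sup_{s ∈ S} g(s,t) is Lipschitz continuous, and for every t ∈ [a,b) one has d⁺f(t) ≤ sup{ ∂g/∂t(s,t) : s ∈ S and g(s,t) = f(t) }. -/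
open Filter Set Topology

private lemma aux_tendsto_of_continuousOn {X Y : Type*} [TopologicalSpace X] [TopologicalSpace Y]
    {F : X → Y} {A : Set X} (hF : ContinuousOn F A) {u : ℕ → X} {x : X}
    (hu : ∀ᶠ n in atTop, u n ∈ A) (hx : x ∈ A) (h : Tendsto u atTop (𝓝 x)) :
    Tendsto (fun n => F (u n)) atTop (𝓝 (F x)) :=
  (hF x hx).tendsto.comp (tendsto_nhdsWithin_iff.2 ⟨h, hu⟩)

private lemma aux_isSeqCompact_prod {S : Type*} [TopologicalSpace S] [SeqCompactSpace S]
    (a b : ℝ) : IsSeqCompact ((Set.univ ×ˢ Set.Icc a b) : Set (S × ℝ)) := by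
  intro u hu
  obtain ⟨s0, -, φ, hφ, hs0⟩ := isSeqCompact_univ (x := fun n => (u n).1)
    (fun n => Set.mem_univ _)
  obtain ⟨t0, ht0, ψ, hψ, ht0'⟩ := isCompact_Icc.isSeqCompact (x := fun n => (u (φ n)).2)
    (fun n => (hu (φ n)).2)
  refine ⟨(s0, t0), ⟨Set.mem_univ _, ht0⟩, φ ∘ ψ, hφ.comp hψ, ?_⟩
  have h1 : Tendsto (fun n => (u (φ (ψ n))).1) atTop (𝓝 s0) := hs0.comp hψ.tendsto_atTop
  have h2 : Tendsto (fun n => (u (φ (ψ n))).2) atTop (𝓝 t0) := ht0'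
  exact h1.prodMk_nhds h2

private lemma aux_isCompact_image {X : Type*} [TopologicalSpace X]
    {F : X → ℝ} {A : Set X} (hA : IsSeqCompact A) (hF : ContinuousOn F A) :
    IsCompact (F '' A) := by
  apply IsSeqCompact.isCompact
  intro y hy
  choose x hx hxe using hy
  obtain ⟨p, hp, φ, hφ, hlim⟩ := hA hx
  refine ⟨F p, Set.mem_image_of_mem _ hp, φ, hφ, ?_⟩
  have := aux_tendsto_of_continuousOn hF (u := fun n => x (φ n))
    (Eventually.of_forall fun n => hx (φ n)) hp hlim
  exact this.congr fun n => hxe (φ n)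

theorem stmt_3 {S : Type*} [TopologicalSpace S] [Nonempty S] [SeqCompactSpace S]
    (a b : ℝ) (hab : a < b) (g g' : S → ℝ → ℝ)
    (hg : ContinuousOn (fun p : S × ℝ => g p.1 p.2) (Set.univ ×ˢ Set.Icc a b))
    (hderiv : ∀ s : S, ∀ t ∈ Set.Icc a b,
      HasDerivWithinAt (g s) (g' s t) (Set.Icc a b) t)
    (hg' : ContinuousOn (fun p : S × ℝ => g' p.1 p.2) (Set.univ ×ˢ Set.Icc a b))
    (f : ℝ → ℝ) (hf : ∀ t : ℝ, f t = ⨆ s : S, g s t) :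
    (∃ K : NNReal, LipschitzOnWith K f (Set.Icc a b)) ∧
      ∀ t ∈ Set.Ico a b,
        upperForwardDeriv f t ≤
          ((sSup {y : ℝ | ∃ s : S, g s t = f t ∧ y = g' s t} : ℝ) : EReal) := by
  have hseq : IsSeqCompact ((Set.univ ×ˢ Set.Icc a b) : Set (S × ℝ)) :=
    aux_isSeqCompact_prod a b
  -- bound on g'
  obtain ⟨K0, hK0⟩ : ∃ K0 : ℝ, ∀ p ∈ (Set.univ ×ˢ Set.Icc a b : Set (S × ℝ)),
      |g' p.1 p.2| ≤ K0 := by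
    have hcomp := aux_isCompact_image hseq hg'
    obtain ⟨K0, hK0⟩ := hcomp.isBounded.exists_norm_le
    exact ⟨K0, fun p hp => by
      simpa [Real.norm_eq_abs] using hK0 _ (Set.mem_image_of_mem _ hp)⟩
  have hK0nn : 0 ≤ K0 := by
    have := hK0 (Classical.arbitrary S, a) ⟨Set.mem_univ _, Set.left_mem_Icc.2 hab.le⟩
    exact (abs_nonneg _).trans this
  -- each g s is Lipschitz on Icc a b
  have hlip : ∀ s : S, LipschitzOnWith K0.toNNReal (g s) (Set.Icc a b) := by
    intro s
    apply (convex_Icc a b).lipschitzOnWith_of_nnnorm_hasDerivWithin_le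
      (fun x hx => hderiv s x hx)
    intro x hx
    rw [← NNReal.coe_le_coe, coe_nnnorm, Real.norm_eq_abs, Real.coe_toNNReal _ hK0nn]
    exact hK0 (s, x) ⟨Set.mem_univ _, hx⟩
  -- maximizers exist
  have hmax : ∀ t ∈ Set.Icc a b, (∃ s0 : S, g s0 t = f t) ∧ ∀ s : S, g s t ≤ f t := by
    intro t ht
    have hcont : Continuous fun s : S => g s t :=
      hg.comp_continuous (continuous_id.prodMk continuous_const)
        (fun s => ⟨Set.mem_univ _, ht⟩)
    have hcomp : IsCompact (Set.range fun s : S => g s t) := by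
      rw [← Set.image_univ]
      exact aux_isCompact_image isSeqCompact_univ hcont.continuousOn
    have hne : (Set.range fun s : S => g s t).Nonempty := Set.range_nonempty _
    have hmem := hcomp.sSup_mem hne
    have hft : f t = sSup (Set.range fun s : S => g s t) := hf t
    constructor
    · obtain ⟨s0, hs0⟩ := hmem
      exact ⟨s0, by rw [hft]; exact hs0⟩
    · intro s
      rw [hft]
      exact le_csSup hcomp.bddAbove (Set.mem_range_self s)
  -- Lipschitz bound for f
  have hflip : ∀ t1 ∈ Set.Icc a b, ∀ t2 ∈ Set.Icc a b, f t1 - f t2 ≤ K0 * |t1 - t2| := by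
    intro t1 ht1 t2 ht2
    obtain ⟨⟨s1, hs1⟩, -⟩ := hmax t1 ht1
    have h1 : g s1 t1 - g s1 t2 ≤ K0 * |t1 - t2| := by
      have := (hlip s1).dist_le_mul t1 ht1 t2 ht2
      rw [Real.dist_eq, Real.dist_eq, Real.coe_toNNReal _ hK0nn] at this
      exact (le_abs_self _).trans this
    have h2 : g s1 t2 ≤ f t2 := (hmax t2 ht2).2 s1
    linarith [hs1 ▸ h1]
  have hfLip : LipschitzOnWith K0.toNNReal f (Set.Icc a b) := by
    rw [lipschitzOnWith_iff_dist_le_mul]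
    intro t1 ht1 t2 ht2
    rw [Real.dist_eq, Real.dist_eq, Real.coe_toNNReal _ hK0nn]
    rcases abs_sub_le_iff.2 ⟨hflip t1 ht1 t2 ht2, by
      simpa [abs_sub_comm] using hflip t2 ht2 t1 ht1⟩ with h
    exact h
  refine ⟨⟨K0.toNNReal, hfLip⟩, ?_⟩
  intro t ht
  set M : Set ℝ := {y : ℝ | ∃ s : S, g s t = f t ∧ y = g' s t} with hM
  set L : ℝ := sSup M with hL
  have htI : t ∈ Set.Icc a b := ⟨ht.1, ht.2.le⟩
  have hMne : M.Nonempty := by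
    obtain ⟨⟨s0, hs0⟩, -⟩ := hmax t htI
    exact ⟨g' s0 t, s0, hs0, rfl⟩
  have hMbdd : BddAbove M := by
    refine ⟨K0, fun y hy => ?_⟩
    obtain ⟨s, -, rfl⟩ := hy
    exact (le_abs_self _).trans (hK0 (s, t) ⟨Set.mem_univ _, htI⟩)
  -- key claim
  have claim : ∀ ε : ℝ, 0 < ε →
      ∀ᶠ h in nhdsWithin (0:ℝ) (Set.Ioi 0), (f (t + h) - f t) / h ≤ L + ε := by
    intro ε hε
    by_contra hcon
    rw [Filter.not_eventually] at hcon
    simp only [not_le] at hcon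
    obtain ⟨u, hu_tendsto, hu_gt⟩ := Filter.exists_seq_forall_of_frequently hcon
    rw [tendsto_nhdsWithin_iff] at hu_tendsto
    obtain ⟨hu0, hupos⟩ := hu_tendsto
    have husmall : ∀ᶠ n in atTop, u n ≤ b - t := by
      have hbt : (0:ℝ) < b - t := by linarith [ht.2]
      have habs : Tendsto (fun n => |u n|) atTop (𝓝 0) := by simpa using hu0.abs
      have : ∀ᶠ n in atTop, |u n| < b - t := habs.eventually_lt_const hbt
      exact this.mono fun n hn => (le_abs_self _).trans hn.le
    have hEev : ∀ᶠ n in atTop, 0 < u n ∧ u n ≤ b - t :=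
      (hupos.and husmall).mono fun n hn => ⟨hn.1, hn.2⟩
    have key : ∀ n, ∃ p : S × ℝ, p.2 ∈ Set.Icc a b ∧ |p.2 - t| ≤ |u n| ∧
        (0 < u n ∧ u n ≤ b - t → (f (t + u n) - f t) / u n ≤ g' p.1 p.2 ∧ g p.1 (t + u n) = f (t + u n)) := by
      intro n
      by_cases hn : 0 < u n ∧ u n ≤ b - t
      · have hmem : t + u n ∈ Set.Icc a b :=
          ⟨by linarith [ht.1, hn.1], by linarith [hn.2]⟩
        obtain ⟨⟨s0, hs0⟩, -⟩ := hmax (t + u n) hmem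
        have hlt : t < t + u n := by linarith [hn.1]
        have hsub : Set.Icc t (t + u n) ⊆ Set.Icc a b :=
          Set.Icc_subset_Icc ht.1 hmem.2
        have hcont : ContinuousOn (g s0) (Set.Icc t (t + u n)) :=
          fun x hx => ((hderiv s0 x (hsub hx)).continuousWithinAt).mono hsub
        have hd : ∀ x ∈ Set.Ioo t (t + u n), HasDerivAt (g s0) (g' s0 x) x := by
          intro x hx
          have hxI : x ∈ Set.Icc a b := hsub ⟨hx.1.le, hx.2.le⟩
          have hxint : Set.Icc a b ∈ 𝓝 x := by
            apply Icc_mem_nhds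
            · linarith [ht.1, hx.1]
            · linarith [hx.2, hn.2]
          exact (hderiv s0 x hxI).hasDerivAt hxint
        obtain ⟨c, hc, hceq⟩ := exists_hasDerivAt_eq_slope (g s0) (g' s0) hlt hcont hd
        refine ⟨(s0, c), hsub ⟨hc.1.le, hc.2.le⟩, ?_, fun _ => ⟨?_, hs0⟩⟩
        · rw [abs_of_pos (by linarith [hc.1] : (0:ℝ) < c - t), abs_of_pos hn.1]
          linarith [hc.2]
        · have h2 : g s0 t ≤ f t := (hmax t htI).2 s0
          have hslope : g' s0 c = (g s0 (t + u n) - g s0 t) / (t + u n - t) := hceq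
          rw [hslope]
          have : t + u n - t = u n := by ring
          rw [this, hs0]
          exact (div_le_div_iff_of_pos_right hn.1).2 (by linarith)
      · exact ⟨(Classical.arbitrary S, t), htI, by simp [abs_nonneg], fun h => absurd h hn⟩
    choose p hp1 hp2 hp3 using key
    obtain ⟨sst, -, φ, hφ, hslim⟩ := isSeqCompact_univ (x := fun n => (p n).1)
      (fun n => Set.mem_univ _)
    have huφ0 : Tendsto (fun n => u (φ n)) atTop (𝓝 0) := hu0.comp hφ.tendsto_atTop
    have hEφ : ∀ᶠ n in atTop, 0 < u (φ n) ∧ u (φ n) ≤ b - t := hφ.tendsto_atTop.eventually hEev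
    have hξlim : Tendsto (fun n => (p (φ n)).2) atTop (𝓝 t) := by
      have h1 : Tendsto (fun n => |u (φ n)|) atTop (𝓝 0) := by
        simpa using huφ0.abs
      have h2 : Tendsto (fun n => (p (φ n)).2 - t) atTop (𝓝 0) := by
        apply squeeze_zero_norm _ h1
        intro n
        simpa [Real.norm_eq_abs] using hp2 (φ n)
      simpa using h2.add_const t
    -- limit of g' along the sequence
    have hg'lim : Tendsto (fun n => g' (p (φ n)).1 (p (φ n)).2) atTop (𝓝 (g' sst t)) := by
      have := aux_tendsto_of_continuousOn hg'
        (u := fun n => ((p (φ n)).1, (p (φ n)).2))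
        (Eventually.of_forall fun n => ⟨Set.mem_univ _, hp1 (φ n)⟩)
        (⟨Set.mem_univ _, htI⟩ : (sst, t) ∈ (Set.univ ×ˢ Set.Icc a b : Set (S × ℝ)))
        (hslim.prodMk_nhds hξlim)
      exact this
    -- sst is a maximizer at t
    have hmaxlim : g sst t = f t := by
      have hglim : Tendsto (fun n => g (p (φ n)).1 (t + u (φ n))) atTop (𝓝 (g sst t)) := by
        have hmem : ∀ᶠ n in atTop, ((p (φ n)).1, t + u (φ n)) ∈
            (Set.univ ×ˢ Set.Icc a b : Set (S × ℝ)) := by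
          filter_upwards [hEφ] with n hn
          exact Set.mk_mem_prod (Set.mem_univ _)
            ⟨by linarith [ht.1, hn.1], by linarith [hn.2]⟩
        have hptlim : Tendsto (fun n => ((p (φ n)).1, t + u (φ n))) atTop (𝓝 (sst, t)) := by
          have : Tendsto (fun n => t + u (φ n)) atTop (𝓝 t) := by
            simpa using (huφ0.const_add t)
          exact hslim.prodMk_nhds this
        exact aux_tendsto_of_continuousOn hg hmem ⟨Set.mem_univ _, htI⟩ hptlim
      have hflim : Tendsto (fun n => f (t + u (φ n))) atTop (𝓝 (f t)) := by
        have hmem : ∀ᶠ n in atTop, t + u (φ n) ∈ Set.Icc a b := by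
          filter_upwards [hEφ] with n hn
          exact ⟨by linarith [ht.1, hn.1], by linarith [hn.2]⟩
        have : Tendsto (fun n => t + u (φ n)) atTop (𝓝 t) := by
          simpa using (huφ0.const_add t)
        exact aux_tendsto_of_continuousOn (hfLip.continuousOn) hmem htI this
      have heq : ∀ᶠ n in atTop, g (p (φ n)).1 (t + u (φ n)) = f (t + u (φ n)) := by
        filter_upwards [hEφ] with n hn
        exact (hp3 (φ n) hn).2
      exact tendsto_nhds_unique (hglim.congr' heq) hflim
    have hmemM : g' sst t ∈ M := ⟨sst, hmaxlim, rfl⟩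
    have hleL : g' sst t ≤ L := le_csSup hMbdd hmemM
    -- contradiction
    have hbound : ∀ᶠ n in atTop, L + ε ≤ g' (p (φ n)).1 (p (φ n)).2 := by
      filter_upwards [hEφ] with n hn
      exact ((hu_gt (φ n)).le.trans ((hp3 (φ n) hn).1))
    have : L + ε ≤ g' sst t := le_of_tendsto_of_tendsto tendsto_const_nhds hg'lim
      (hbound.mono fun n hn => hn)
    linarith
  -- conclude the limsup bound
  apply le_of_forall_gt_imp_ge_of_dense
  intro z hz
  obtain ⟨r, hr1, hr2⟩ := EReal.lt_iff_exists_real_btwn.1 hz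
  have hεpos : (0:ℝ) < r - L := by exact_mod_cast sub_pos.2 (EReal.coe_lt_coe_iff.1 hr1)
  have hev := claim (r - L) hεpos
  have hlimsup : upperForwardDeriv f t ≤ ((r : ℝ) : EReal) := by
    refine Filter.limsup_le_of_le (by isBoundedDefault) ?_
    filter_upwards [hev] with h hh
    have : (f (t + h) - f t) / h ≤ r := by linarith
    exact_mod_cast this
  exact hlimsup.trans hr2.le
end

section
/- Let U ⊆ ℝⁿ be open, let J ⊆ U be a nonempty closed convex set, and let F : U × [0,T] → ℝⁿ be continuous in t and uniformly Lipschitz in its first variable. Suppose that for every initial time t₀ ∈ [0,T) every solution τ of the ODE dτ/dt = F(τ,t) on [t₀,T] with τ(t₀) ∈ J satisfies τ(t) ∈ J for all t ∈ [t₀,T]. Then v + F(v,t) ∈ C_v J for every v ∈ ∂J (the topological boundary of J in ℝⁿ) and every t ∈ [0,T). -/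
open Filter Set Metric Real
open scoped NNReal Topology

section MainAux
section OdeAux

variable {E : Type*} [NormedAddCommGroup E] [NormedSpace ℝ E]

lemma ode_aux_singleton (f : ℝ → E) (d : E) (x : ℝ) : HasDerivWithinAt f d (Icc x x) x := by
  rw [hasDerivWithinAt_iff_tendsto_slope]
  have h : Icc x x \ {x} = (∅ : Set ℝ) := by simp
  rw [h, nhdsWithin_empty]
  exact tendsto_bot

lemma ode_aux_Ici {f : ℝ → E} {d : E} {a b t : ℝ} (ht : t ∈ Ico a b)
    (h : HasDerivWithinAt f d (Icc a b) t) : HasDerivWithinAt f d (Ici t) t := by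
  refine (h.mono (Icc_subset_Icc_left ht.1)).mono_of_mem_nhdsWithin ?_
  have h1 : Iic b ∈ 𝓝 t := Iic_mem_nhds ht.2
  have h2 : Ici t ∩ Iic b ∈ 𝓝[Ici t] t :=
    inter_mem self_mem_nhdsWithin (mem_nhdsWithin_of_mem_nhds h1)
  rwa [Ici_inter_Iic] at h2

lemma ode_aux_cont {F : E → ℝ → E} {σ : ℝ → E} {a b : ℝ}
    (h : ∀ t ∈ Icc a b, HasDerivWithinAt σ (F (σ t) t) (Icc a b) t) :
    ContinuousOn σ (Icc a b) := fun t ht => (h t ht).continuousWithinAt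

/-- Grönwall comparison of two solutions staying in `U`. -/
lemma ode_aux_gronwall {F : E → ℝ → E} {U : Set E} {K : ℝ≥0} {a b : ℝ}
    (hK : ∀ t ∈ Icc a b, LipschitzOnWith K (fun x => F x t) U)
    {σ γ : ℝ → E} {δ : ℝ}
    (hσd : ∀ t ∈ Icc a b, HasDerivWithinAt σ (F (σ t) t) (Icc a b) t)
    (hσU : ∀ t ∈ Icc a b, σ t ∈ U)
    (hγd : ∀ t ∈ Icc a b, HasDerivWithinAt γ (F (γ t) t) (Icc a b) t)
    (hγU : ∀ t ∈ Icc a b, γ t ∈ U)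
    (hδ : dist (σ a) (γ a) ≤ δ) :
    ∀ t ∈ Icc a b, dist (σ t) (γ t) ≤ δ * Real.exp (K * (t - a)) := by
  classical
  have hv : ∀ t, LipschitzOnWith K (fun x => F x t)
      (if t ∈ Icc a b then U else (∅ : Set E)) := by
    intro t
    by_cases h : t ∈ Icc a b
    · rw [if_pos h]; exact hK t h
    · rw [if_neg h]; exact lipschitzOnWith_empty K (fun x => F x t)
  have hmσ : ∀ t ∈ Ico a b, σ t ∈ (if t ∈ Icc a b then U else (∅ : Set E)) := by
    intro t ht
    rw [if_pos (Ico_subset_Icc_self ht)]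
    exact hσU t (Ico_subset_Icc_self ht)
  have hmγ : ∀ t ∈ Ico a b, γ t ∈ (if t ∈ Icc a b then U else (∅ : Set E)) := by
    intro t ht
    rw [if_pos (Ico_subset_Icc_self ht)]
    exact hγU t (Ico_subset_Icc_self ht)
  exact dist_le_of_trajectories_ODE_of_mem (v := fun t x => F x t)
    (s := fun t => if t ∈ Icc a b then U else (∅ : Set E)) (fun t _ => hv t)
    (ode_aux_cont hσd) (fun t ht => ode_aux_Ici ht (hσd t (Ico_subset_Icc_self ht))) hmσ
    (ode_aux_cont hγd) (fun t ht => ode_aux_Ici ht (hγd t (Ico_subset_Icc_self ht))) hmγ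
    hδ

/-- Speed bound: a solution whose velocity is bounded by `M` moves at most `M * (t - a)`. -/
lemma ode_aux_speed {F : E → ℝ → E} {σ : ℝ → E} {a b M : ℝ}
    (hσd : ∀ t ∈ Icc a b, HasDerivWithinAt σ (F (σ t) t) (Icc a b) t)
    (hM : ∀ t ∈ Icc a b, ‖F (σ t) t‖ ≤ M) :
    ∀ t ∈ Icc a b, ‖σ t - σ a‖ ≤ M * (t - a) := by
  intro t ht
  have h := norm_le_gronwallBound_of_norm_deriv_right_le (f := fun t => σ t - σ a)
    (f' := fun t => F (σ t) t) (δ := 0) (K := 0) (ε := M) (a := a) (b := b)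
    ((ode_aux_cont hσd).sub continuousOn_const)
    (fun u hu => ((ode_aux_Ici hu (hσd u (Ico_subset_Icc_self hu))).sub_const _))
    (by simp)
    (fun u hu => by
      simpa using hM u (Ico_subset_Icc_self hu))
    t ht
  simpa [gronwallBound_K0] using h

/-- Growth bound relative to a fixed center `c`. -/
lemma ode_aux_growth {F : E → ℝ → E} {U : Set E} {K : ℝ≥0} {σ : ℝ → E} {a b M₀ δ : ℝ} {c : E}
    (hK : ∀ t ∈ Icc a b, LipschitzOnWith K (fun x => F x t) U)
    (hc : ∀ t ∈ Icc a b, ‖F c t‖ ≤ M₀)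
    (hcU : c ∈ U)
    (hσd : ∀ t ∈ Icc a b, HasDerivWithinAt σ (F (σ t) t) (Icc a b) t)
    (hσU : ∀ t ∈ Icc a b, σ t ∈ U)
    (ha : ‖σ a - c‖ ≤ δ) :
    ∀ t ∈ Icc a b, ‖σ t - c‖ ≤ gronwallBound δ K M₀ (t - a) := by
  refine norm_le_gronwallBound_of_norm_deriv_right_le (f := fun t => σ t - c)
    (f' := fun t => F (σ t) t) ((ode_aux_cont hσd).sub continuousOn_const)
    (fun u hu => ((ode_aux_Ici hu (hσd u (Ico_subset_Icc_self hu))).sub_const _))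
    ha ?_
  intro u hu
  have hu' := Ico_subset_Icc_self hu
  have h1 : ‖F (σ u) u - F c u‖ ≤ K * ‖σ u - c‖ := by
    have := (hK u hu').dist_le_mul (σ u) (hσU u hu') c hcU
    simpa [dist_eq_norm] using this
  calc ‖F (σ u) u‖ = ‖(F (σ u) u - F c u) + F c u‖ := by rw [sub_add_cancel]
    _ ≤ ‖F (σ u) u - F c u‖ + ‖F c u‖ := norm_add_le _ _
    _ ≤ K * ‖σ u - c‖ + M₀ := add_le_add h1 (hc u hu')

end OdeAux
section OdeAux2

variable {E : Type*} [NormedAddCommGroup E] [NormedSpace ℝ E]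

/-- Picard–Lindelöf existence, with the extra information that the solution stays in the ball. -/
lemma ode_aux_picard [CompleteSpace E] {v : ℝ → E → E} {tMin tMax : ℝ} {x₀ : E}
    {L : ℝ≥0} {R C : ℝ≥0} {ht₀ : tMin ∈ Icc tMin tMax}
    (hpl : IsPicardLindelof v ⟨tMin, ht₀⟩ x₀ R 0 C L) :
    ∃ f : ℝ → E, f tMin = x₀ ∧ ∀ t ∈ Icc tMin tMax,
      f t ∈ closedBall x₀ R ∧ HasDerivWithinAt f (v t (f t)) (Icc tMin tMax) t := by
  obtain ⟨α, hα⟩ := ODE.FunSpace.exists_isFixedPt_next hpl (mem_closedBall_self le_rfl)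
  refine ⟨α.compProj, ?_, fun t ht => ⟨α.compProj_mem_closedBall hpl.mul_max_le, ?_⟩⟩
  · rw [ODE.FunSpace.compProj_of_mem ht₀]
    exact α.apply_of_zero
  · apply ODE.hasDerivWithinAt_picard_Icc ht₀ hpl.continuousOn_uncurry
      α.continuous_compProj.continuousOn (fun _ ht' ↦ α.compProj_mem_closedBall hpl.mul_max_le)
      x₀ ht |>.congr_of_mem _ ht
    intro t' ht'
    nth_rw 1 [← hα]
    rw [ODE.FunSpace.compProj_of_mem ht', ODE.FunSpace.next_apply]

/-- Gluing two solutions at a common point. -/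
lemma ode_aux_glue {F : E → ℝ → E} {σ₁ σ₂ : ℝ → E} {a m b : ℝ}
    (ham : a ≤ m) (hmb : m ≤ b) (heq : σ₁ m = σ₂ m)
    (h₁ : ∀ t ∈ Icc a m, HasDerivWithinAt σ₁ (F (σ₁ t) t) (Icc a m) t)
    (h₂ : ∀ t ∈ Icc m b, HasDerivWithinAt σ₂ (F (σ₂ t) t) (Icc m b) t) :
    ∃ σ : ℝ → E, (∀ t ∈ Icc a m, σ t = σ₁ t) ∧ (∀ t ∈ Icc m b, σ t = σ₂ t) ∧
      ∀ t ∈ Icc a b, HasDerivWithinAt σ (F (σ t) t) (Icc a b) t := by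
  classical
  refine ⟨fun t => if t ≤ m then σ₁ t else σ₂ t, ?_, ?_, ?_⟩
  · intro t ht
    show (if t ≤ m then σ₁ t else σ₂ t) = σ₁ t
    rw [if_pos ht.2]
  · intro t ht
    show (if t ≤ m then σ₁ t else σ₂ t) = σ₂ t
    rcases eq_or_lt_of_le ht.1 with h | h
    · rw [← h, if_pos le_rfl]; exact heq
    · rw [if_neg (not_le.mpr h)]
  · intro t ht
    set σ : ℝ → E := fun t => if t ≤ m then σ₁ t else σ₂ t with hσ
    have hon1 : ∀ u ∈ Icc a m, σ u = σ₁ u := fun u hu => if_pos hu.2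
    have hon2 : ∀ u ∈ Icc m b, σ u = σ₂ u := by
      intro u hu
      rcases eq_or_lt_of_le hu.1 with h | h
      · show (if u ≤ m then σ₁ u else σ₂ u) = σ₂ u
        rw [← h] at *
        rw [if_pos le_rfl]; exact heq
      · show (if u ≤ m then σ₁ u else σ₂ u) = σ₂ u
        rw [if_neg (not_le.mpr h)]
    rcases lt_trichotomy t m with hlt | heqt | hgt
    · -- t < m
      have hd : HasDerivWithinAt σ (F (σ t) t) (Icc a m) t := by
        have := (h₁ t ⟨ht.1, hlt.le⟩).congr hon1 (hon1 t ⟨ht.1, hlt.le⟩)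
        rw [hon1 t ⟨ht.1, hlt.le⟩]; exact this
      refine hd.mono_of_mem_nhdsWithin ?_
      have h1 : Iic m ∈ 𝓝 t := Iic_mem_nhds hlt
      have h2 : Icc a b ∩ Iic m ∈ 𝓝[Icc a b] t :=
        inter_mem self_mem_nhdsWithin (mem_nhdsWithin_of_mem_nhds h1)
      have h3 : Icc a b ∩ Iic m = Icc a m := by
        ext u; simp only [mem_inter_iff, mem_Icc, mem_Iic]
        constructor
        · rintro ⟨⟨h4, _⟩, h5⟩; exact ⟨h4, h5⟩
        · rintro ⟨h4, h5⟩; exact ⟨⟨h4, h5.trans hmb⟩, h5⟩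
      rwa [h3] at h2
    · -- t = m
      subst heqt
      have hd1 : HasDerivWithinAt σ (F (σ t) t) (Icc a t) t := by
        have := (h₁ t ⟨ht.1, le_rfl⟩).congr hon1 (hon1 t ⟨ht.1, le_rfl⟩)
        rw [hon1 t ⟨ht.1, le_rfl⟩]; exact this
      have hd2 : HasDerivWithinAt σ (F (σ t) t) (Icc t b) t := by
        have h5 : σ t = σ₂ t := hon2 t ⟨le_rfl, ht.2⟩
        have := (h₂ t ⟨le_rfl, ht.2⟩).congr hon2 (hon2 t ⟨le_rfl, ht.2⟩)
        rw [h5]; exact this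
      have := hd1.union hd2
      rwa [Icc_union_Icc_eq_Icc ht.1 ht.2] at this
    · -- t > m
      have hd : HasDerivWithinAt σ (F (σ t) t) (Icc m b) t := by
        have := (h₂ t ⟨hgt.le, ht.2⟩).congr hon2 (hon2 t ⟨hgt.le, ht.2⟩)
        rw [hon2 t ⟨hgt.le, ht.2⟩]; exact this
      refine hd.mono_of_mem_nhdsWithin ?_
      have h1 : Ici m ∈ 𝓝 t := Ici_mem_nhds hgt
      have h2 : Icc a b ∩ Ici m ∈ 𝓝[Icc a b] t :=
        inter_mem self_mem_nhdsWithin (mem_nhdsWithin_of_mem_nhds h1)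
      have h3 : Icc a b ∩ Ici m = Icc m b := by
        ext u; simp only [mem_inter_iff, mem_Icc, mem_Ici]
        constructor
        · rintro ⟨⟨_, h5⟩, h4⟩; exact ⟨h4, h5⟩
        · rintro ⟨h4, h5⟩; exact ⟨⟨ham.trans h4, h5⟩, h4⟩
      rwa [h3] at h2

end OdeAux2
end MainAux

open Filter Set

/-- The tangent cone `C_v J` of a closed convex set `J` at `v`:
`C_v J = v + closure { s • (w − v) : s ≥ 0, w ∈ J }`. -/
def convexTangentConeAt {n : ℕ} (J : Set (EuclideanSpace ℝ (Fin n)))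
    (v : EuclideanSpace ℝ (Fin n)) : Set (EuclideanSpace ℝ (Fin n)) :=
  {x | x - v ∈ closure {y | ∃ s : ℝ, 0 ≤ s ∧ ∃ w ∈ J, y = s • (w - v)}}

set_option maxHeartbeats 1000000 in
theorem stmt_4 (n : ℕ) (U : Set (EuclideanSpace ℝ (Fin n))) (hU : IsOpen U)
    (J : Set (EuclideanSpace ℝ (Fin n))) (hJU : J ⊆ U) (hJne : J.Nonempty)
    (hJcl : IsClosed J) (hJconv : Convex ℝ J)
    (T : ℝ) (hT : 0 < T)
    (F : EuclideanSpace ℝ (Fin n) → ℝ → EuclideanSpace ℝ (Fin n))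
    (hFt : ∀ v ∈ U, ContinuousOn (fun t => F v t) (Set.Icc 0 T))
    (hFlip : ∃ C : NNReal, ∀ t ∈ Set.Icc (0 : ℝ) T, LipschitzOnWith C (fun v => F v t) U)
    (hODE : ∀ t₀ ∈ Set.Ico (0 : ℝ) T, ∀ τ : ℝ → EuclideanSpace ℝ (Fin n),
      (∀ t ∈ Set.Icc t₀ T, τ t ∈ U) →
      (∀ t ∈ Set.Icc t₀ T, HasDerivWithinAt τ (F (τ t) t) (Set.Icc t₀ T) t) →
      τ t₀ ∈ J → ∀ t ∈ Set.Icc t₀ T, τ t ∈ J) :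
    ∀ v ∈ frontier J, ∀ t ∈ Set.Ico (0 : ℝ) T,
      v + F v t ∈ convexTangentConeAt J v := by
  classical
  intro v hv t₀ ht₀
  obtain ⟨K₁, hK₁⟩ := hFlip
  set K : ℝ≥0 := K₁ + 1 with hKdef
  have hK : ∀ t ∈ Icc (0:ℝ) T, LipschitzOnWith K (fun x => F x t) U := fun t ht =>
    lipschitzOnWith_iff_restrict.mpr
      ((lipschitzOnWith_iff_restrict.mp (hK₁ t ht)).weaken (le_add_of_nonneg_right zero_le))
  have hKpos : (0:ℝ) < (K : ℝ) := by
    have h1 : (1 : ℝ≥0) ≤ K := le_add_self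
    exact_mod_cast lt_of_lt_of_le zero_lt_one h1
  have hvJ : v ∈ J := hJcl.frontier_subset hv
  have hvU : v ∈ U := hJU hvJ
  -- bound on ‖F v ·‖
  obtain ⟨M₁, hM₁⟩ := isCompact_Icc.exists_bound_of_continuousOn (hFt v hvU)
  set M₀ : ℝ := max M₁ 0 with hM₀def
  have hM₀ : ∀ t ∈ Icc (0:ℝ) T, ‖F v t‖ ≤ M₀ := fun t ht => (hM₁ t ht).trans (le_max_left _ _)
  have hM₀0 : 0 ≤ M₀ := le_max_right _ _
  -- growth radius
  set R : ℝ := (1 + M₀ / K) * Real.exp (K * T) with hRdef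
  have hexpT : (1:ℝ) ≤ Real.exp (K * T) := by
    rw [← Real.exp_zero]
    exact Real.exp_le_exp.mpr (by positivity)
  have hR1 : (1:ℝ) ≤ R := by
    have h1 : (1:ℝ) ≤ 1 + M₀ / K := by
      have : 0 ≤ M₀ / K := div_nonneg hM₀0 hKpos.le
      linarith
    nlinarith
  have hR0 : (0:ℝ) ≤ R := by linarith
  -- growth bound for solutions starting near v
  have hgrow : ∀ (a : ℝ) (σ : ℝ → EuclideanSpace ℝ (Fin n)), a ∈ Icc (0:ℝ) T →
      (∀ t ∈ Icc a T, HasDerivWithinAt σ (F (σ t) t) (Icc a T) t) →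
      (∀ t ∈ Icc a T, σ t ∈ U) → ‖σ a - v‖ ≤ 1 →
      ∀ t ∈ Icc a T, ‖σ t - v‖ ≤ R := by
    intro a σ ha hd hUmem hstart t ht
    have hsub : Icc a T ⊆ Icc (0:ℝ) T := Icc_subset_Icc ha.1 le_rfl
    have h := ode_aux_growth (U := U) (K := K) (M₀ := M₀) (c := v)
      (fun u hu => hK u (hsub hu)) (fun u hu => hM₀ u (hsub hu)) hvU hd hUmem hstart t ht
    refine h.trans ?_
    rw [gronwallBound_of_K_ne_0 (ne_of_gt hKpos)]
    have h1 : Real.exp ((K:ℝ) * (t - a)) ≤ Real.exp ((K:ℝ) * T) := by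
      apply Real.exp_le_exp.mpr
      have h2 : t - a ≤ T := by
        have h3 := ht.2; have h4 := ha.1; linarith
      nlinarith
    have h3 : (0:ℝ) ≤ M₀ / K := div_nonneg hM₀0 hKpos.le
    have h4 : (0:ℝ) < Real.exp ((K:ℝ) * (t - a)) := Real.exp_pos _
    rw [hRdef]
    nlinarith
  -- the compact core and tube
  set K₀ : Set (EuclideanSpace ℝ (Fin n)) := J ∩ closedBall v R with hK₀def
  have hK₀c : IsCompact K₀ := (isCompact_closedBall v R).inter_left hJcl
  have hK₀U : K₀ ⊆ U := fun x hx => hJU hx.1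
  have hvK₀ : v ∈ K₀ := ⟨hvJ, mem_closedBall_self hR0⟩
  obtain ⟨ρ, hρpos, hρU⟩ := hK₀c.exists_cthickening_subset_open hU hK₀U
  set W : Set (EuclideanSpace ℝ (Fin n)) := Metric.cthickening ρ K₀ with hWdef
  have hWU : W ⊆ U := hρU
  have hWc : IsCompact W := hK₀c.cthickening
  have hK₀W : K₀ ⊆ W := self_subset_cthickening K₀
  have hball : ∀ x z : EuclideanSpace ℝ (Fin n), z ∈ K₀ → dist x z ≤ ρ/2 →
      closedBall x (ρ/2) ⊆ W := by
    intro x z hz hxz y hy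
    refine mem_cthickening_of_dist_le y z ρ K₀ hz ?_
    calc dist y z ≤ dist y x + dist x z := dist_triangle _ _ _
      _ ≤ ρ/2 + ρ/2 := add_le_add (mem_closedBall.mp hy) hxz
      _ = ρ := by ring
  -- bound of ‖F‖ on the tube
  have hjoint : ContinuousOn (fun p : (EuclideanSpace ℝ (Fin n)) × ℝ => F p.1 p.2)
      (U ×ˢ Icc (0:ℝ) T) :=
    continuousOn_prod_of_continuousOn_lipschitzOnWith _ K hFt hK
  obtain ⟨M₂, hM₂⟩ := (hWc.prod isCompact_Icc).exists_bound_of_continuousOn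
    (hjoint.mono (Set.prod_mono hWU subset_rfl))
  set M : ℝ := max M₂ 1 with hMdef
  have hM : ∀ x ∈ W, ∀ t ∈ Icc (0:ℝ) T, ‖F x t‖ ≤ M :=
    fun x hx t ht => (hM₂ (x, t) ⟨hx, ht⟩).trans (le_max_left _ _)
  have hM1 : (1:ℝ) ≤ M := le_max_right _ _
  have hMpos : (0:ℝ) < M := lt_of_lt_of_le zero_lt_one hM1
  -- step sizes
  set ε₁ : ℝ := ρ / (2 * M) with hε₁def
  have hε₁pos : 0 < ε₁ := by positivity
  have hMε₁ : M * ε₁ = ρ / 2 := by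
    rw [hε₁def]; field_simp
  set δ₀ : ℝ := (ρ/4) * Real.exp (-((K:ℝ) * T)) with hδ₀def
  have hδ₀pos : 0 < δ₀ := by positivity
  have hδ₀le : δ₀ ≤ ρ/4 := by
    have h1 : Real.exp (-((K:ℝ) * T)) ≤ 1 := exp_le_one_iff.mpr (neg_nonpos.mpr (by positivity))
    nlinarith
  set ε₂ : ℝ := δ₀ / M with hε₂def
  have hε₂pos : 0 < ε₂ := by positivity
  have hMε₂ : M * ε₂ = δ₀ := by
    rw [hε₂def]; field_simp
  have hε₂ε₁ : ε₂ ≤ ε₁ := by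
    rw [hε₂def, hε₁def]
    rw [div_le_div_iff₀ hMpos (by positivity)]
    nlinarith
  -- local existence from points near the core
  have hloc : ∀ a b : ℝ, a ∈ Icc (0:ℝ) T → b ∈ Icc a T → M * (b - a) ≤ ρ/2 →
      ∀ x z : EuclideanSpace ℝ (Fin n), z ∈ K₀ → dist x z ≤ ρ/2 →
      ∃ σ : ℝ → EuclideanSpace ℝ (Fin n), σ a = x ∧ ∀ t ∈ Icc a b, σ t ∈ closedBall x (ρ/2) ∧
        HasDerivWithinAt σ (F (σ t) t) (Icc a b) t := by
    intro a b ha hb hsmall x z hz hxz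
    have hsub : closedBall x (ρ/2) ⊆ W := hball x z hz hxz
    have hIccsub : Icc a b ⊆ Icc (0:ℝ) T := Icc_subset_Icc ha.1 hb.2
    have hpl : IsPicardLindelof (fun t y => F y t) (⟨a, ⟨le_rfl, hb.1⟩⟩ : Icc a b) x
        ⟨ρ/2, by positivity⟩ 0 ⟨M, hMpos.le⟩ K := by
      refine ⟨?_, ?_, ?_, ?_⟩
      · exact fun t ht => (hK t (hIccsub ht)).mono (hsub.trans hWU)
      · exact fun y hy => (hFt y (hWU (hsub hy))).mono hIccsub
      · exact fun t ht y hy => hM y (hsub hy) t (hIccsub ht)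
      · have h1 : max (b - a) (a - a) = b - a := by
          rw [sub_self]
          exact max_eq_left (by linarith [hb.1])
        simp only [NNReal.coe_zero, sub_zero]
        rw [h1]; exact hsmall
    exact ode_aux_picard hpl
  -- trivial solutions on degenerate intervals
  have htriv : ∀ (x : EuclideanSpace ℝ (Fin n)) (a : ℝ), ∀ t ∈ Icc a a,
      HasDerivWithinAt (fun _ : ℝ => x) (F x t) (Icc a a) t := by
    intro x a t ht
    have h : t = a := le_antisymm ht.2 ht.1
    subst h
    exact ode_aux_singleton _ _ _
  -- Extension lemma: near a core-valued solution, solutions extend to time T inside the tube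
  have ext : ∀ a ∈ Icc (0:ℝ) T, ∀ γ : ℝ → EuclideanSpace ℝ (Fin n),
      ∀ y : EuclideanSpace ℝ (Fin n),
      (∀ t ∈ Icc a T, γ t ∈ K₀) →
      (∀ t ∈ Icc a T, HasDerivWithinAt γ (F (γ t) t) (Icc a T) t) →
      ‖y - γ a‖ ≤ δ₀ →
      ∃ σ : ℝ → EuclideanSpace ℝ (Fin n), σ a = y ∧ (∀ t ∈ Icc a T, σ t ∈ W) ∧
        (∀ t ∈ Icc a T, HasDerivWithinAt σ (F (σ t) t) (Icc a T) t) := by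
    intro a ha γ y hγK hγd hyd
    have haT : a ≤ T := ha.2
    have key : ∀ k : ℕ, ∃ σ : ℝ → EuclideanSpace ℝ (Fin n), σ a = y ∧
        (∀ t ∈ Icc a (min (a + (k:ℝ)*ε₁) T), σ t ∈ W) ∧
        (∀ t ∈ Icc a (min (a + (k:ℝ)*ε₁) T),
          HasDerivWithinAt σ (F (σ t) t) (Icc a (min (a + (k:ℝ)*ε₁) T)) t) := by
      intro k
      induction k with
      | zero =>
        have h0 : min (a + ((0:ℕ):ℝ)*ε₁) T = a := by
          push_cast
          rw [zero_mul, add_zero]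
          exact min_eq_left haT
        rw [h0]
        have hyW : y ∈ W := by
          refine mem_cthickening_of_dist_le y (γ a) ρ K₀ (hγK a ⟨le_rfl, haT⟩) ?_
          rw [dist_eq_norm]
          calc ‖y - γ a‖ ≤ δ₀ := hyd
            _ ≤ ρ/4 := hδ₀le
            _ ≤ ρ := by linarith
        exact ⟨fun _ => y, rfl, fun t _ => hyW, fun t ht => htriv y a t ht⟩
      | succ k ih =>
        obtain ⟨σ, hσa, hσW, hσd⟩ := ih
        by_cases hmT : T ≤ a + (k:ℝ)*ε₁
        · have h1 : min (a + (k:ℝ)*ε₁) T = T := min_eq_right hmT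
          have h2 : min (a + ((k+1:ℕ):ℝ)*ε₁) T = T := by
            push_cast
            push_cast at hmT
            refine min_eq_right (hmT.trans ?_)
            nlinarith [hε₁pos.le, Nat.cast_nonneg (α := ℝ) k]
          rw [h2]
          rw [h1] at hσW hσd
          exact ⟨σ, hσa, hσW, hσd⟩
        · push_neg at hmT
          set m : ℝ := min (a + (k:ℝ)*ε₁) T with hm
          have hmeq : m = a + (k:ℝ)*ε₁ := min_eq_left hmT.le
          have ham : a ≤ m := by
            rw [hmeq]
            nlinarith [hε₁pos.le, Nat.cast_nonneg (α := ℝ) k]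
          have hmIcc : m ∈ Icc (0:ℝ) T := ⟨le_trans ha.1 ham, min_le_right _ _⟩
          have hmaT : m - a ≤ T := by
            have h5 := hmIcc.2; have h6 := ha.1; linarith
          have hsubm : Icc a m ⊆ Icc a T := Icc_subset_Icc le_rfl hmIcc.2
          have hsub0 : Icc a m ⊆ Icc (0:ℝ) T := Icc_subset_Icc ha.1 hmIcc.2
          have hσU : ∀ t ∈ Icc a m, σ t ∈ U := fun t ht => hWU (hσW t ht)
          have hγdm : ∀ t ∈ Icc a m, HasDerivWithinAt γ (F (γ t) t) (Icc a m) t :=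
            fun t ht => (hγd t (hsubm ht)).mono hsubm
          have hγUm : ∀ t ∈ Icc a m, γ t ∈ U := fun t ht => hK₀U (hγK t (hsubm ht))
          have hγmK₀ : γ m ∈ K₀ := hγK m (hsubm ⟨ham, le_rfl⟩)
          have hstart : dist (σ a) (γ a) ≤ δ₀ := by
            rw [hσa, dist_eq_norm]
            exact hyd
          have hdist := ode_aux_gronwall (δ := δ₀) (fun t ht => hK t (hsub0 ht)) hσd hσU hγdm hγUm
            hstart m ⟨ham, le_rfl⟩
          have hdist2 : dist (σ m) (γ m) ≤ ρ/4 := by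
            refine hdist.trans ?_
            rw [hδ₀def, mul_assoc, ← Real.exp_add]
            have h7 : Real.exp (-((K:ℝ)*T) + (K:ℝ)*(m-a)) ≤ 1 :=
              exp_le_one_iff.mpr (by nlinarith [hKpos.le, hmaT])
            have h8 : (0:ℝ) < Real.exp (-((K:ℝ)*T) + (K:ℝ)*(m-a)) := Real.exp_pos _
            nlinarith [hρpos]
          set m' : ℝ := min (a + ((k+1:ℕ):ℝ)*ε₁) T with hm'
          have hmm' : m ≤ m' := by
            rw [hmeq, hm']
            refine le_min ?_ hmT.le
            push_cast
            nlinarith [hε₁pos.le]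
          have hm'T : m' ≤ T := min_le_right _ _
          have hm'm : m' - m ≤ ε₁ := by
            have h9 : m' ≤ a + ((k+1:ℕ):ℝ)*ε₁ := min_le_left _ _
            rw [hmeq]
            push_cast at h9 ⊢
            nlinarith
          obtain ⟨σ₂, hσ₂m, hσ₂⟩ := hloc m m' hmIcc ⟨hmm', hm'T⟩
            (by nlinarith [hMε₁, hMpos.le]) (σ m) (γ m) hγmK₀ (hdist2.trans (by linarith))
          obtain ⟨σ', he1, he2, hd'⟩ := ode_aux_glue ham hmm' hσ₂m.symm hσd
            (fun t ht => (hσ₂ t ht).2)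
          refine ⟨σ', by rw [he1 a ⟨le_rfl, ham⟩, hσa], ?_, hd'⟩
          intro t ht
          by_cases htm : t ≤ m
          · rw [he1 t ⟨ht.1, htm⟩]
            exact hσW t ⟨ht.1, htm⟩
          · push_neg at htm
            rw [he2 t ⟨htm.le, ht.2⟩]
            exact hball (σ m) (γ m) hγmK₀ (hdist2.trans (by linarith))
              (hσ₂ t ⟨htm.le, ht.2⟩).1
    obtain ⟨k, hk⟩ := exists_nat_ge ((T - a)/ε₁)
    obtain ⟨σ, h1, h2, h3⟩ := key k
    have hfin : min (a + (k:ℝ)*ε₁) T = T := by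
      refine min_eq_right ?_
      rw [div_le_iff₀ hε₁pos] at hk
      linarith
    rw [hfin] at h2 h3
    exact ⟨σ, h1, h2, h3⟩
  -- Main: every point of J near v admits a J-valued solution up to time T
  have main : ∀ k : ℕ, ∀ a ∈ Icc (0:ℝ) T, T - a ≤ (k:ℝ)*ε₂ →
      ∀ x : EuclideanSpace ℝ (Fin n), x ∈ J → ‖x - v‖ ≤ 1 →
      ∃ σ : ℝ → EuclideanSpace ℝ (Fin n), σ a = x ∧ (∀ t ∈ Icc a T, σ t ∈ K₀) ∧
        (∀ t ∈ Icc a T, HasDerivWithinAt σ (F (σ t) t) (Icc a T) t) := by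
    intro k
    induction k with
    | zero =>
      intro a ha h0 x hxJ hxv
      have haT : a = T := by
        push_cast at h0
        have := ha.2
        linarith
      subst haT
      have hxK₀ : x ∈ K₀ := ⟨hxJ, mem_closedBall_iff_norm.mpr (hxv.trans hR1)⟩
      exact ⟨fun _ => x, rfl, fun t _ => hxK₀, fun t ht => htriv x a t ht⟩
    | succ k ih =>
      intro a ha hk x hxJ hxv
      by_cases hcase : T - a ≤ (k:ℝ)*ε₂
      · exact ih a ha hcase x hxJ hxv
      · push_neg at hcase
        set a' : ℝ := T - (k:ℝ)*ε₂ with ha'def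
        have haa' : a ≤ a' := by
          rw [ha'def]; linarith
        have ha'T : a' ≤ T := by
          rw [ha'def]
          nlinarith [hε₂pos.le, Nat.cast_nonneg (α := ℝ) k]
        have ha'Icc : a' ∈ Icc (0:ℝ) T := ⟨le_trans ha.1 haa', ha'T⟩
        have ha'a : a' - a ≤ ε₂ := by
          push_cast at hk
          rw [ha'def]
          linarith
        have haltT : a < T := by
          have h1 : (0:ℝ) ≤ (k:ℝ)*ε₂ := by positivity
          linarith
        have hxK₀ : x ∈ K₀ := ⟨hxJ, mem_closedBall_iff_norm.mpr (hxv.trans hR1)⟩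
        -- short local solution from (x, a)
        obtain ⟨σ₁, hσ₁a, hσ₁⟩ := hloc a a' ha ⟨haa', ha'T⟩
          (by nlinarith [hMε₁, hMpos.le, hε₂ε₁]) x x hxK₀ (by rw [dist_self]; positivity)
        have hσ₁W : ∀ t ∈ Icc a a', σ₁ t ∈ W :=
          fun t ht => hball x x hxK₀ (by rw [dist_self]; positivity) (hσ₁ t ht).1
        -- speed bound for the local solution
        have hspeed := ode_aux_speed (F := F) (M := M) (fun t ht => (hσ₁ t ht).2)
          (fun t ht => hM (σ₁ t) (hσ₁W t ht) t (Icc_subset_Icc ha.1 ha'T ht))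
          a' ⟨haa', le_rfl⟩
        rw [hσ₁a] at hspeed
        have hspeed2 : ‖σ₁ a' - x‖ ≤ δ₀ := by
          refine hspeed.trans ?_
          nlinarith [hMpos.le, ha'a, hMε₂, haa']
        -- reference solution from (x, a') by induction hypothesis
        obtain ⟨γ, hγa, hγK, hγd⟩ := ih a' ha'Icc (by rw [ha'def]; linarith) x hxJ hxv
        -- extend past a' staying in the tube
        obtain ⟨σ₂, hσ₂a, hσ₂W, hσ₂d⟩ := ext a' ha'Icc γ (σ₁ a') hγK hγd
          (by rw [hγa]; exact hspeed2)
        -- glue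
        obtain ⟨σ, he1, he2, hd⟩ := ode_aux_glue haa' ha'T hσ₂a.symm
          (fun t ht => (hσ₁ t ht).2) hσ₂d
        have hσa : σ a = x := by rw [he1 a ⟨le_rfl, haa'⟩, hσ₁a]
        have hσU : ∀ t ∈ Icc a T, σ t ∈ U := by
          intro t ht
          by_cases htm : t ≤ a'
          · rw [he1 t ⟨ht.1, htm⟩]
            exact hWU (hσ₁W t ⟨ht.1, htm⟩)
          · push_neg at htm
            rw [he2 t ⟨htm.le, ht.2⟩]
            exact hWU (hσ₂W t ⟨htm.le, ht.2⟩)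
        have hσJ : ∀ t ∈ Icc a T, σ t ∈ J :=
          hODE a ⟨ha.1, haltT⟩ σ hσU hd (by rw [hσa]; exact hxJ)
        have hσR := hgrow a σ ha hd hσU (by rw [hσa]; exact hxv)
        exact ⟨σ, hσa, fun t ht => ⟨hσJ t ht, mem_closedBall_iff_norm.mpr (hσR t ht)⟩, hd⟩
  -- apply at (v, t₀)
  obtain ⟨k, hkk⟩ := exists_nat_ge ((T - t₀)/ε₂)
  have hkk2 : T - t₀ ≤ (k:ℝ)*ε₂ := by
    rw [div_le_iff₀ hε₂pos] at hkk
    linarith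
  obtain ⟨σ, hσt₀, hσK, hσd⟩ := main k t₀ ⟨ht₀.1, ht₀.2.le⟩ hkk2 v hvJ (by simp)
  -- pass to the limit of difference quotients
  have hder : HasDerivWithinAt σ (F v t₀) (Icc t₀ T) t₀ := by
    have h1 := hσd t₀ ⟨le_rfl, ht₀.2.le⟩
    rwa [hσt₀] at h1
  rw [hasDerivWithinAt_iff_tendsto_slope, Icc_diff_left] at hder
  haveI : (𝓝[Ioc t₀ T] t₀).NeBot := left_nhdsWithin_Ioc_neBot ht₀.2
  have hgoal : F v t₀ ∈ closure {y : EuclideanSpace ℝ (Fin n) |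
      ∃ s : ℝ, 0 ≤ s ∧ ∃ w ∈ J, y = s • (w - v)} := by
    refine mem_closure_of_tendsto hder ?_
    filter_upwards [self_mem_nhdsWithin] with u hu
    refine ⟨(u - t₀)⁻¹, inv_nonneg.mpr (by linarith [hu.1]), σ u,
      (hσK u (Ioc_subset_Icc_self hu)).1, ?_⟩
    rw [slope_def_module, hσt₀]
  show (v + F v t₀) - v ∈ closure _
  rwa [add_sub_cancel_left]
end

section
/- Let U ⊆ ℝⁿ be open, let J ⊆ U be a nonempty closed convex set, and let F : U × [0,T] → ℝⁿ be continuous in t and uniformly Lipschitz in its first variable. Suppose that v + F(v,t) ∈ C_v J for every v ∈ ∂J (the topological boundary of J in ℝⁿ) and every t ∈ [0,T). Then for every initial time t₀ ∈ [0,T), every solution τ of the ODE dτ/dt = F(τ,t) on [t₀,T] with τ(t₀) ∈ J satisfies τ(t) ∈ J for all t ∈ [t₀,T]. -/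
open Filter Set

theorem stmt_5 (n : ℕ) (U : Set (EuclideanSpace ℝ (Fin n))) (hU : IsOpen U)
    (J : Set (EuclideanSpace ℝ (Fin n))) (hJU : J ⊆ U) (hJne : J.Nonempty)
    (hJcl : IsClosed J) (hJconv : Convex ℝ J)
    (T : ℝ) (hT : 0 < T)
    (F : EuclideanSpace ℝ (Fin n) → ℝ → EuclideanSpace ℝ (Fin n))
    (hFt : ∀ v ∈ U, ContinuousOn (fun t => F v t) (Set.Icc 0 T))
    (hFlip : ∃ C : NNReal, ∀ t ∈ Set.Icc (0 : ℝ) T, LipschitzOnWith C (fun v => F v t) U)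
    (hcone : ∀ v ∈ frontier J, ∀ t ∈ Set.Ico (0 : ℝ) T,
      v + F v t ∈ convexTangentConeAt J v) :
    ∀ t₀ ∈ Set.Ico (0 : ℝ) T, ∀ τ : ℝ → EuclideanSpace ℝ (Fin n),
      (∀ t ∈ Set.Icc t₀ T, τ t ∈ U) →
      (∀ t ∈ Set.Icc t₀ T, HasDerivWithinAt τ (F (τ t) t) (Set.Icc t₀ T) t) →
      τ t₀ ∈ J → ∀ t ∈ Set.Icc t₀ T, τ t ∈ J := by
  obtain ⟨C, hC⟩ := hFlip
  intro t₀ ht₀ τ hτU hder hτ0 t ht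
  set f : ℝ → ℝ := fun t => Metric.infDist (τ t) J with hfdef
  -- continuity of f on [t₀, T]
  have hτcont : ContinuousOn τ (Icc t₀ T) := fun s hs => (hder s hs).continuousWithinAt
  have hfcont : ContinuousOn f (Icc t₀ T) :=
    (Metric.continuous_infDist_pt J).comp_continuousOn hτcont
  -- the key slope estimate
  have key : ∀ x ∈ Ico t₀ T, ∀ r, (C : ℝ) * f x < r →
      ∃ᶠ z in nhdsWithin x (Ioi x), (z - x)⁻¹ * (f z - f x) < r := by
    intro x hx r hr
    apply Eventually.frequently
    have hxIcc : x ∈ Icc t₀ T := ⟨hx.1, hx.2.le⟩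
    have hx0T : x ∈ Ico (0 : ℝ) T := ⟨le_trans ht₀.1 hx.1, hx.2⟩
    have hIocmem : Ioc x T ∈ nhdsWithin x (Ioi x) :=
      Ioc_mem_nhdsGT_of_mem ⟨le_refl x, hx.2⟩
    have hIccmem : ∀ᶠ z in nhdsWithin x (Ioi x), z ∈ Icc t₀ T := by
      filter_upwards [hIocmem] with z hz
      exact ⟨le_trans hx.1 hz.1.le, hz.2⟩
    have transfer : ∀ {P : ℝ → Prop}, (∀ᶠ z in nhdsWithin x (Icc t₀ T), P z) →
        ∀ᶠ z in nhdsWithin x (Ioi x), P z := by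
      intro P hP
      rw [eventually_nhdsWithin_iff] at hP
      have h1 : ∀ᶠ z in nhdsWithin x (Ioi x), z ∈ Icc t₀ T → P z :=
        (eventually_nhdsWithin_of_eventually_nhds hP)
      filter_upwards [h1, hIccmem] with z h1 h2 using h1 h2
    set p := τ x with hpdef
    have hpU : p ∈ U := hτU x hxIcc
    have hrpos : 0 < r := lt_of_le_of_lt (mul_nonneg C.coe_nonneg Metric.infDist_nonneg) hr
    by_cases hpint : p ∈ interior J
    · -- interior case: f is eventually zero
      have hfx : f x = 0 := Metric.infDist_zero_of_mem (interior_subset hpint)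
      have hev : ∀ᶠ z in nhdsWithin x (Icc t₀ T), τ z ∈ J :=
        hτcont x hxIcc (mem_interior_iff_mem_nhds.mp hpint)
      refine (transfer hev).mono fun z hz => ?_
      have : f z = 0 := Metric.infDist_zero_of_mem hz
      simp [this, hfx, hrpos]
    · -- boundary case
      obtain ⟨v, hvJ, hvd⟩ := hJcl.exists_infDist_eq_dist hJne p
      have hd : f x = dist p v := hvd
      have hdnn : (0:ℝ) ≤ f x := Metric.infDist_nonneg
      -- v is in the frontier of J
      have hvfr : v ∈ frontier J := by
        rcases eq_or_lt_of_le hdnn with h0 | hpos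
        · have hpJ : p ∈ J := (hJcl.mem_iff_infDist_zero hJne).mpr h0.symm
          have hvp : v = p := by
            have : dist p v = 0 := by rw [← hd, ← h0]
            exact (dist_eq_zero.mp this).symm
          rw [hvp]
          exact ⟨subset_closure hpJ, hpint⟩
        · constructor
          · exact subset_closure hvJ
          · intro hvint
            obtain ⟨δ, hδpos, hball⟩ := Metric.isOpen_iff.mp isOpen_interior v hvint
            have hpv : (0:ℝ) < dist p v := by rwa [← hd]
            set t' : ℝ := min (δ / (2 * dist p v)) (1/2) with ht'def
            have ht'pos : 0 < t' := lt_min (div_pos hδpos (by positivity)) one_half_pos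
            have ht'le : t' ≤ 1/2 := min_le_right _ _
            set u := v + t' • (p - v) with hudef
            have huJ : u ∈ J := by
              apply interior_subset
              apply hball
              rw [Metric.mem_ball, hudef, dist_eq_norm]
              have : v + t' • (p - v) - v = t' • (p - v) := by abel
              rw [this, norm_smul, Real.norm_eq_abs, abs_of_pos ht'pos]
              have h1 : t' ≤ δ / (2 * dist p v) := min_le_left _ _
              have : ‖p - v‖ = dist p v := (dist_eq_norm p v).symm
              rw [this]
              calc t' * dist p v ≤ δ / (2 * dist p v) * dist p v :=
                    mul_le_mul_of_nonneg_right h1 hpv.le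
                _ = δ / 2 := by field_simp
                _ < δ := by linarith
            have : Metric.infDist p J ≤ dist p u := Metric.infDist_le_dist_of_mem huJ
            have hdu : dist p u = (1 - t') * dist p v := by
              rw [hudef, dist_eq_norm]
              have : p - (v + t' • (p - v)) = (1 - t') • (p - v) := by
                rw [sub_smul, one_smul]; abel
              rw [this, norm_smul, Real.norm_eq_abs, abs_of_pos (by linarith),
                ← dist_eq_norm]
            rw [hdu, ← hd] at this
            nlinarith
      -- cone condition at v
      have hcv := hcone v hvfr x hx0T
      have hcv' : F v x ∈ closure {y | ∃ s : ℝ, 0 ≤ s ∧ ∃ w ∈ J, y = s • (w - v)} := by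
        have := hcv
        simp only [convexTangentConeAt, mem_setOf_eq, add_sub_cancel_left] at this
        exact this
      -- choose ε and an approximation y = s • (w - v)
      set ε : ℝ := (r - (C : ℝ) * f x) / 3 with hεdef
      have hεpos : 0 < ε := by rw [hεdef]; linarith
      obtain ⟨y, hyS, hyclose⟩ :=
        Metric.mem_closure_iff.mp hcv' ε hεpos
      obtain ⟨s, hs0, w, hwJ, rfl⟩ := hyS
      -- Lipschitz estimate
      have hlip : dist (F p x) (F v x) ≤ (C : ℝ) * f x := by
        have := (hC x ⟨hx0T.1, hx0T.2.le⟩).dist_le_mul p hpU v (hJU hvJ)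
        rwa [← hd] at this
      -- derivative estimate
      have hder' := (hder x hxIcc)
      rw [hasDerivWithinAt_iff_isLittleO] at hder'
      have hlittle : ∀ᶠ z in nhdsWithin x (Icc t₀ T),
          ‖τ z - τ x - (z - x) • F (τ x) x‖ ≤ ε * ‖z - x‖ :=
        (Asymptotics.isLittleO_iff.mp hder') hεpos
      have hsmall : ∀ᶠ z in nhdsWithin x (Ioi x), z < x + (s + 1)⁻¹ := by
        have : Ioo x (x + (s+1)⁻¹) ∈ nhdsWithin x (Ioi x) :=
          Ioo_mem_nhdsGT_of_mem ⟨le_refl x, by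
            have : (0:ℝ) < (s+1)⁻¹ := inv_pos.mpr (by linarith)
            linarith⟩
        filter_upwards [this] with z hz using hz.2
      filter_upwards [transfer hlittle, hIocmem, hsmall, hIccmem] with z hz1 hz2 hz3 hzIcc
      set h := z - x with hhdef
      have hhpos : 0 < h := by simp [hhdef, hz2.1]
      have hhs1 : h * s ≤ 1 := by
        have hsp : (0:ℝ) < s + 1 := by linarith
        have h1 : h < (s+1)⁻¹ := by rw [hhdef]; linarith [hz3]
        have h2 : h * (s+1) < 1 := by
          calc h * (s+1) < (s+1)⁻¹ * (s+1) := mul_lt_mul_of_pos_right h1 hsp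
            _ = 1 := inv_mul_cancel₀ hsp.ne'
        nlinarith
      -- the point v + h • (s • (w - v)) is in J
      have hmemJ : v + h • (s • (w - v)) ∈ J := by
        have hcomb := hJconv hvJ hwJ (a := 1 - h * s) (b := h * s)
          (by linarith) (by positivity) (by ring)
        have : (1 - h * s) • v + (h * s) • w = v + h • (s • (w - v)) := by
          rw [smul_smul, smul_sub, sub_smul, one_smul]; abel
        rwa [this] at hcomb
      -- estimate f z
      have hfz : f z ≤ dist (τ z) (v + h • (s • (w - v))) :=
        Metric.infDist_le_dist_of_mem hmemJ
      have hdist : dist (τ z) (v + h • (s • (w - v))) ≤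
          ε * h + f x + h * ((C : ℝ) * f x + ε) := by
        rw [dist_eq_norm]
        have hdecomp : τ z - (v + h • (s • (w - v))) =
            (τ z - τ x - h • F (τ x) x) + (p - v) + h • (F p x - s • (w - v)) := by
          simp only [hpdef, hhdef]; module
        rw [hdecomp]
        have t1 : ‖τ z - τ x - h • F (τ x) x‖ ≤ ε * h := by
          have := hz1
          rwa [Real.norm_eq_abs, abs_of_pos hhpos] at this
        have t2 : ‖p - v‖ = f x := by rw [← dist_eq_norm, hd]
        have t3 : ‖h • (F p x - s • (w - v))‖ ≤ h * ((C : ℝ) * f x + ε) := by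
          rw [norm_smul, Real.norm_eq_abs, abs_of_pos hhpos]
          apply mul_le_mul_of_nonneg_left _ hhpos.le
          have hdec : F p x - s • (w - v) = (F p x - F v x) + (F v x - s • (w - v)) := by
            abel
          rw [hdec]
          refine le_trans (norm_add_le _ _) (add_le_add ?_ ?_)
          · rwa [← dist_eq_norm]
          · rw [← dist_eq_norm]; exact hyclose.le
        calc ‖_ + (p - v) + _‖ ≤ ‖(τ z - τ x - h • F (τ x) x) + (p - v)‖ +
              ‖h • (F p x - s • (w - v))‖ := norm_add_le _ _
          _ ≤ ‖τ z - τ x - h • F (τ x) x‖ + ‖p - v‖ + ‖h • (F p x - s • (w - v))‖ := by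
              linarith [norm_add_le (τ z - τ x - h • F (τ x) x) (p - v)]
          _ ≤ ε * h + f x + h * ((C : ℝ) * f x + ε) := by rw [t2]; linarith
      have hquot : f z - f x ≤ h * ((C : ℝ) * f x + 2 * ε) := by
        have := le_trans hfz hdist
        nlinarith
      have hfin : (C : ℝ) * f x + 2 * ε < r := by rw [hεdef]; linarith
      show h⁻¹ * (f z - f x) < r
      rw [inv_mul_lt_iff₀ hhpos]
      calc f z - f x ≤ h * ((C : ℝ) * f x + 2 * ε) := hquot
        _ < h * r := by apply mul_lt_mul_of_pos_left hfin hhpos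
  -- apply Gronwall
  have hbound := le_gronwallBound_of_liminf_deriv_right_le (f' := fun x => (C : ℝ) * f x)
    (K := (C : ℝ)) (ε := 0) (δ := 0)
    hfcont key (by simp [hfdef, Metric.infDist_zero_of_mem hτ0] : f t₀ ≤ 0)
    (fun x _ => by simp) t ht
  rw [gronwallBound_ε0_δ0] at hbound
  have hft : f t = 0 := le_antisymm hbound Metric.infDist_nonneg
  rw [hJcl.mem_iff_infDist_zero hJne]
  exact hft
end

section
/- Let U ⊆ ℝⁿ be open, let J(t) ⊆ U for t ∈ [0,T] be a family of nonempty closed convex sets whose space-time track L is closed in ℝⁿ × ℝ, and assume (F(v,t),1) ∈ C_{(v,t)}L for every point (v,t) of the topological boundary ∂L of L in ℝ^{n+1} with t ∈ [0,T), where F : U × [0,T] → ℝⁿ is continuous in t and uniformly Lipschitz in its first variable. Let τ be a solution of the ODE dτ/dt = F(τ,t) on [t₁,t₂] ⊆ [0,T] with τ(t₁) ∈ J(t₁) and τ(t) ∉ J(t) for all t ∈ (t₁,t₂]. Then the function l(t) = dist(τ(t), J(t)) (Euclidean distance from τ(t) to the set J(t)) is left lower semicontinuous at every point of (t₁,t₂]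 and right-continuous at every point of [t₁,t₂). -/
open Filter Set

/-- The space-time track `L = {(v,t) : v ∈ J(t), 0 ≤ t ≤ T}` of a family of sets. -/
def spaceTimeTrack {n : ℕ} (J : ℝ → Set (EuclideanSpace ℝ (Fin n))) (T : ℝ) :
    Set (EuclideanSpace ℝ (Fin n) × ℝ) :=
  {p | p.1 ∈ J p.2 ∧ p.2 ∈ Set.Icc 0 T}

/-- `(W,1)` belongs to the time-like forward tangent cone `C_{(v,t)}L` of the space-time
track of the family `J`: for every sequence `s i → 0⁺` there are a subsequence `s ∘ φ` and
vectors `W' j → W` with `v + s (φ j) • W' j ∈ J (t + s (φ j))` for all `j`. -/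
def inTimelikeTangentCone {n : ℕ} (J : ℝ → Set (EuclideanSpace ℝ (Fin n)))
    (v : EuclideanSpace ℝ (Fin n)) (t : ℝ) (W : EuclideanSpace ℝ (Fin n)) : Prop :=
  ∀ s : ℕ → ℝ, (∀ i, 0 < s i) → Filter.Tendsto s Filter.atTop (nhds 0) →
    ∃ φ : ℕ → ℕ, StrictMono φ ∧
      ∃ W' : ℕ → EuclideanSpace ℝ (Fin n),
        Filter.Tendsto W' Filter.atTop (nhds W) ∧
        ∀ j, v + s (φ j) • W' j ∈ J (t + s (φ j))

lemma aux_lsc {n : ℕ} (J : ℝ → Set (EuclideanSpace ℝ (Fin n))) (T : ℝ)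
    (htrack : IsClosed (spaceTimeTrack J T))
    (hJne : ∀ s ∈ Set.Icc (0:ℝ) T, (J s).Nonempty)
    (τ : ℝ → EuclideanSpace ℝ (Fin n)) (t₁ t₂ : ℝ)
    (h0 : 0 ≤ t₁) (hT : t₂ ≤ T)
    (I : Set ℝ) (hI : I ⊆ Set.Icc t₁ t₂)
    (t : ℝ) (ht0T : t ∈ Set.Icc (0:ℝ) T)
    (hcont : ContinuousWithinAt τ (Set.Icc t₁ t₂) t)
    (ε : ℝ) (hε : 0 < ε) :
    ∀ᶠ s in nhdsWithin t I,
      Metric.infDist (τ t) (J t) - ε < Metric.infDist (τ s) (J s) := by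
  set l : ℝ → ℝ := fun s => Metric.infDist (τ s) (J s) with hldef
  have hIcc0 : I ⊆ Set.Icc (0:ℝ) T := fun s hs =>
    ⟨h0.trans (hI hs).1, (hI hs).2.trans hT⟩
  by_contra hcon
  rw [Filter.not_eventually] at hcon
  have hfreq : ∃ᶠ s in nhdsWithin t I, l s ≤ l t - ε :=
    hcon.mono fun s hs => not_lt.mp hs
  have hne : (nhdsWithin t I ⊓ 𝓟 {s | l s ≤ l t - ε}).NeBot :=
    Filter.frequently_iff_neBot.mp hfreq
  obtain ⟨x, hx⟩ := Filter.exists_seq_tendsto (nhdsWithin t I ⊓ 𝓟 {s | l s ≤ l t - ε})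
  have hxI : Tendsto x atTop (nhdsWithin t I) := hx.mono_right inf_le_left
  have hxS : ∀ᶠ i in atTop, l (x i) ≤ l t - ε :=
    tendsto_principal.mp (hx.mono_right inf_le_right)
  have hxt : Tendsto x atTop (nhds t) := hxI.mono_right nhdsWithin_le_nhds
  have hxmemI : ∀ᶠ i in atTop, x i ∈ I := eventually_mem_of_tendsto_nhdsWithin hxI
  have hτx : Tendsto (fun i => τ (x i)) atTop (nhds (τ t)) := by
    have hxin : Tendsto x atTop (nhdsWithin t (Set.Icc t₁ t₂)) :=
      tendsto_nhdsWithin_of_tendsto_nhds_of_eventually_within x hxt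
        (hxmemI.mono fun i hi => hI hi)
    exact hcont.tendsto.comp hxin
  have hdist1 : ∀ᶠ i in atTop, dist (τ (x i)) (τ t) < 1 :=
    Metric.tendsto_nhds.mp hτx 1 one_pos
  obtain ⟨N, hN⟩ := eventually_atTop.mp ((hxS.and hxmemI).and hdist1)
  have hNadd : Tendsto (fun i : ℕ => N + i) atTop atTop :=
    tendsto_atTop_mono (fun i => Nat.le_add_left i N) tendsto_id
  set y : ℕ → ℝ := fun i => x (N + i) with hydef
  have hyS : ∀ i, l (y i) ≤ l t - ε := fun i => ((hN _ (Nat.le_add_right N i)).1).1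
  have hyI : ∀ i, y i ∈ I := fun i => ((hN _ (Nat.le_add_right N i)).1).2
  have hyd : ∀ i, dist (τ (y i)) (τ t) < 1 := fun i => (hN _ (Nat.le_add_right N i)).2
  have hyt : Tendsto y atTop (nhds t) := hxt.comp hNadd
  have hτy : Tendsto (fun i => τ (y i)) atTop (nhds (τ t)) := hτx.comp hNadd
  have hvex : ∀ i : ℕ, ∃ w ∈ J (y i), dist (τ (y i)) w < l (y i) + 1/((i:ℝ)+1) := by
    intro i
    refine (Metric.infDist_lt_iff (hJne (y i) (hIcc0 (hyI i)))).mp ?_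
    have : (0:ℝ) < 1/((i:ℝ)+1) := by positivity
    linarith
  choose v hvJ hvd using hvex
  have hone : ∀ i : ℕ, (1:ℝ)/((i:ℝ)+1) ≤ 1 := by
    intro i
    rw [div_le_one (by positivity)]
    have := Nat.cast_nonneg (α := ℝ) i
    linarith
  have hlt0 : 0 ≤ l t := Metric.infDist_nonneg
  have hvb : ∀ i, v i ∈ Metric.closedBall (τ t) (l t + 3) := by
    intro i
    rw [Metric.mem_closedBall]
    have h1 := hvd i
    have h2 := hyd i
    have h3 := hyS i
    have h4 := hone i
    calc dist (v i) (τ t) ≤ dist (v i) (τ (y i)) + dist (τ (y i)) (τ t) :=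
          dist_triangle _ _ _
      _ = dist (τ (y i)) (v i) + dist (τ (y i)) (τ t) := by rw [dist_comm]
      _ ≤ l t + 3 := by linarith
  obtain ⟨vlim, -, φ, hφ, hvt⟩ :=
    tendsto_subseq_of_bounded Metric.isBounded_closedBall hvb
  have hyφt : Tendsto (fun j => y (φ j)) atTop (nhds t) := hyt.comp hφ.tendsto_atTop
  have hpt : Tendsto (fun j => ((v (φ j), y (φ j)) : EuclideanSpace ℝ (Fin n) × ℝ))
      atTop (nhds (vlim, t)) := hvt.prodMk_nhds hyφt
  have hmemL : (vlim, t) ∈ spaceTimeTrack J T := by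
    refine htrack.mem_of_tendsto hpt (Filter.Eventually.of_forall fun j => ?_)
    exact ⟨hvJ (φ j), hIcc0 (hyI (φ j))⟩
  have hvlimJ : vlim ∈ J t := hmemL.1
  have hlow : l t ≤ dist (τ t) vlim := Metric.infDist_le_dist_of_mem hvlimJ
  set c : ℕ → ℝ := fun j =>
    dist (τ t) (τ (y (φ j))) + (l t - ε + 1/((φ j : ℝ)+1)) + dist (v (φ j)) vlim with hcdef
  have hcle : ∀ j, l t ≤ c j := by
    intro j
    have h1 : dist (τ t) vlim ≤
        dist (τ t) (τ (y (φ j))) + dist (τ (y (φ j))) (v (φ j)) + dist (v (φ j)) vlim :=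
      dist_triangle4 _ _ _ _
    have h2 := hvd (φ j)
    have h3 := hyS (φ j)
    simp only [hcdef]
    linarith
  have hcten : Tendsto c atTop (nhds (0 + (l t - ε + 0) + 0)) := by
    refine Filter.Tendsto.add (Filter.Tendsto.add ?_ ?_) ?_
    · have := (tendsto_const_nhds (x := τ t)).dist (hτy.comp hφ.tendsto_atTop)
      simpa using this
    · refine Filter.Tendsto.const_add _ ?_
      exact tendsto_one_div_add_atTop_nhds_zero_nat.comp hφ.tendsto_atTop
    · have := hvt.dist (tendsto_const_nhds (x := vlim))
      simpa using this
  have hfinal : l t ≤ l t - ε := by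
    have := ge_of_tendsto' hcten hcle
    linarith [this]
  linarith

theorem stmt_9 (n : ℕ) (U : Set (EuclideanSpace ℝ (Fin n))) (hU : IsOpen U)
    (T : ℝ) (hT : 0 < T)
    (J : ℝ → Set (EuclideanSpace ℝ (Fin n)))
    (hJ : ∀ t ∈ Set.Icc (0 : ℝ) T,
      J t ⊆ U ∧ (J t).Nonempty ∧ IsClosed (J t) ∧ Convex ℝ (J t))
    (htrack : IsClosed (spaceTimeTrack J T))
    (F : EuclideanSpace ℝ (Fin n) → ℝ → EuclideanSpace ℝ (Fin n))
    (hFt : ∀ v ∈ U, ContinuousOn (fun t => F v t) (Set.Icc 0 T))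
    (hFlip : ∃ C : NNReal, ∀ t ∈ Set.Icc (0 : ℝ) T, LipschitzOnWith C (fun v => F v t) U)
    (hcone : ∀ v : EuclideanSpace ℝ (Fin n), ∀ t ∈ Set.Ico (0 : ℝ) T,
      (v, t) ∈ frontier (spaceTimeTrack J T) →
      inTimelikeTangentCone J v t (F v t))
    (t₁ t₂ : ℝ) (ht₁ : 0 ≤ t₁) (ht₁₂ : t₁ < t₂) (ht₂ : t₂ ≤ T)
    (τ : ℝ → EuclideanSpace ℝ (Fin n))
    (hτU : ∀ t ∈ Set.Icc t₁ t₂, τ t ∈ U)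
    (hτode : ∀ t ∈ Set.Icc t₁ t₂, HasDerivWithinAt τ (F (τ t) t) (Set.Icc t₁ t₂) t)
    (hτin : τ t₁ ∈ J t₁)
    (hτout : ∀ t ∈ Set.Ioc t₁ t₂, τ t ∉ J t) :
    (∀ t ∈ Set.Ioc t₁ t₂,
      LeftLowerSemicontinuousAt (fun t => Metric.infDist (τ t) (J t)) t) ∧
    (∀ t ∈ Set.Ico t₁ t₂,
      RightContinuousAt (fun t => Metric.infDist (τ t) (J t)) t) := by
  have hJne : ∀ s ∈ Set.Icc (0:ℝ) T, (J s).Nonempty := fun s hs => (hJ s hs).2.1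
  set l : ℝ → ℝ := fun s => Metric.infDist (τ s) (J s) with hldef
  constructor
  · -- left lower semicontinuity
    intro t ht ε hε
    have htIcc : t ∈ Set.Icc t₁ t₂ := ⟨ht.1.le, ht.2⟩
    have ht0T : t ∈ Set.Icc (0:ℝ) T := ⟨ht₁.trans ht.1.le, ht.2.trans ht₂⟩
    have hcont : ContinuousWithinAt τ (Set.Icc t₁ t₂) t :=
      (hτode t htIcc).continuousWithinAt
    have hIsub : Set.Ioo t₁ t ⊆ Set.Icc t₁ t₂ := fun s hs =>
      ⟨hs.1.le, hs.2.le.trans ht.2⟩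
    have haux := aux_lsc J T htrack hJne τ t₁ t₂ ht₁ ht₂ (Set.Ioo t₁ t) hIsub t
      ht0T hcont ε hε
    rw [eventually_nhdsWithin_iff] at haux ⊢
    have hgt : ∀ᶠ s in nhds t, t₁ < s := eventually_gt_nhds ht.1
    filter_upwards [haux, hgt] with s hs hgts hlts
    exact hs ⟨hgts, hlts⟩
  · -- right continuity
    intro t ht
    have htIcc : t ∈ Set.Icc t₁ t₂ := ⟨ht.1, ht.2.le⟩
    have ht0T : t ∈ Set.Icc (0:ℝ) T := ⟨ht₁.trans ht.1, ht.2.le.trans ht₂⟩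
    have hcont : ContinuousWithinAt τ (Set.Icc t₁ t₂) t :=
      (hτode t htIcc).continuousWithinAt
    have hIsub : Set.Ioo t t₂ ⊆ Set.Icc t₁ t₂ := fun s hs =>
      ⟨ht.1.trans hs.1.le, hs.2.le⟩
    rw [RightContinuousAt, Metric.tendsto_nhds]
    intro ε hε
    -- lower bound
    have hlower := aux_lsc J T htrack hJne τ t₁ t₂ ht₁ ht₂ (Set.Ioo t t₂) hIsub t
      ht0T hcont ε hε
    -- upper bound
    have hupper : ∀ᶠ s in nhdsWithin t (Set.Ioo t t₂), l s < l t + ε := by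
      obtain ⟨v, hvJ, hvdist⟩ :=
        (hJ t ht0T).2.2.1.exists_infDist_eq_dist (hJne t ht0T) (τ t)
      have hvL : (v, t) ∈ spaceTimeTrack J T := ⟨hvJ, ht0T⟩
      have hτten : Tendsto τ (nhdsWithin t (Set.Ioo t t₂)) (nhds (τ t)) :=
        (hcont.mono hIsub).tendsto
      have hdistsmall : ∀ᶠ s in nhdsWithin t (Set.Ioo t t₂), dist (τ s) (τ t) < ε/2 :=
        Metric.tendsto_nhds.mp hτten (ε/2) (half_pos hε)
      by_cases hint : (v, t) ∈ interior (spaceTimeTrack J T)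
      · -- interior case
        obtain ⟨δ, hδ, hball⟩ := Metric.mem_nhds_iff.mp (mem_interior_iff_mem_nhds.mp hint)
        have hidt : Tendsto (fun s : ℝ => s) (nhdsWithin t (Set.Ioo t t₂)) (nhds t) :=
          tendsto_id.mono_left nhdsWithin_le_nhds
        have hev : ∀ᶠ s in nhdsWithin t (Set.Ioo t t₂), dist s t < δ :=
          Metric.tendsto_nhds.mp hidt δ hδ
        filter_upwards [hev, hdistsmall] with s hs1 hs2
        have hmem : ((v, s) : EuclideanSpace ℝ (Fin n) × ℝ) ∈ spaceTimeTrack J T := by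
          apply hball
          rw [Metric.mem_ball, Prod.dist_eq]
          simpa using hs1
        have h1 : l s ≤ dist (τ s) v := Metric.infDist_le_dist_of_mem hmem.1
        have h2 : dist (τ s) v ≤ dist (τ s) (τ t) + dist (τ t) v := dist_triangle _ _ _
        have h3 : dist (τ t) v = l t := hvdist.symm
        linarith
      · -- frontier case: use the tangent cone
        have hfr : (v, t) ∈ frontier (spaceTimeTrack J T) := by
          rw [htrack.frontier_eq]; exact ⟨hvL, hint⟩
        have hconev := hcone v t ⟨ht0T.1, lt_of_lt_of_le ht.2 ht₂⟩ hfr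
        by_contra hcon
        rw [Filter.not_eventually] at hcon
        have hfreq : ∃ᶠ s in nhdsWithin t (Set.Ioo t t₂), l t + ε ≤ l s :=
          hcon.mono fun s hs => not_lt.mp hs
        have hne : (nhdsWithin t (Set.Ioo t t₂) ⊓ 𝓟 {s | l t + ε ≤ l s}).NeBot :=
          Filter.frequently_iff_neBot.mp hfreq
        obtain ⟨x, hx⟩ := Filter.exists_seq_tendsto
          (nhdsWithin t (Set.Ioo t t₂) ⊓ 𝓟 {s | l t + ε ≤ l s})
        have hxI : Tendsto x atTop (nhdsWithin t (Set.Ioo t t₂)) :=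
          hx.mono_right inf_le_left
        have hxS : ∀ᶠ i in atTop, l t + ε ≤ l (x i) := by
          have h := tendsto_principal.mp (hx.mono_right inf_le_right)
          exact h.mono fun i hi => hi
        have hxt : Tendsto x atTop (nhds t) := hxI.mono_right nhdsWithin_le_nhds
        have hxmemI : ∀ᶠ i in atTop, x i ∈ Set.Ioo t t₂ :=
          eventually_mem_of_tendsto_nhdsWithin hxI
        obtain ⟨N, hN⟩ := eventually_atTop.mp (hxS.and hxmemI)
        have hNadd : Tendsto (fun i : ℕ => N + i) atTop atTop :=
          tendsto_atTop_mono (fun i => Nat.le_add_left i N) tendsto_id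
        set y : ℕ → ℝ := fun i => x (N + i) with hydef
        have hyS : ∀ i, l t + ε ≤ l (y i) := fun i => (hN _ (Nat.le_add_right N i)).1
        have hyI : ∀ i, y i ∈ Set.Ioo t t₂ := fun i => (hN _ (Nat.le_add_right N i)).2
        have hyt : Tendsto y atTop (nhds t) := hxt.comp hNadd
        set s' : ℕ → ℝ := fun i => y i - t with hs'def
        have hs'pos : ∀ i, 0 < s' i := fun i => sub_pos.mpr (hyI i).1
        have hs'0 : Tendsto s' atTop (nhds 0) := by
          have := hyt.sub_const t
          simpa using this
        obtain ⟨φ, hφ, W', hW', hWmem⟩ := hconev s' hs'pos hs'0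
        have hτy : Tendsto (fun j => τ (y (φ j))) atTop (nhds (τ t)) := by
          have h1 : Tendsto (fun j => y (φ j)) atTop (nhds t) :=
            hyt.comp hφ.tendsto_atTop
          have h2 : Tendsto (fun j => y (φ j)) atTop
              (nhdsWithin t (Set.Icc t₁ t₂)) :=
            tendsto_nhdsWithin_of_tendsto_nhds_of_eventually_within _ h1
              (Filter.Eventually.of_forall fun j => hIsub (hyI (φ j)))
          exact hcont.tendsto.comp h2
        set c : ℕ → ℝ := fun j =>
          dist (τ (y (φ j))) (τ t) + l t + ‖s' (φ j) • W' j‖ with hcdef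
        have hkey : ∀ j, l t + ε ≤ c j := by
          intro j
          have hmem := hWmem j
          rw [show t + s' (φ j) = y (φ j) by simp [hs'def]] at hmem
          have h1 : l (y (φ j)) ≤ dist (τ (y (φ j))) (v + s' (φ j) • W' j) :=
            Metric.infDist_le_dist_of_mem hmem
          have h2 : dist (τ (y (φ j))) (v + s' (φ j) • W' j) ≤
              dist (τ (y (φ j))) (τ t) + dist (τ t) v + dist v (v + s' (φ j) • W' j) :=
            dist_triangle4 _ _ _ _
          rw [dist_self_add_right] at h2
          have h3 := hyS (φ j)
          have h4 : dist (τ t) v = l t := hvdist.symm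
          simp only [hcdef]
          linarith
        have hcten : Tendsto c atTop (nhds (0 + l t + 0)) := by
          refine Filter.Tendsto.add (Filter.Tendsto.add ?_ tendsto_const_nhds) ?_
          · have := hτy.dist (tendsto_const_nhds (x := τ t))
            simpa using this
          · have hs'φ : Tendsto (fun j => s' (φ j)) atTop (nhds 0) :=
              hs'0.comp hφ.tendsto_atTop
            have := (hs'φ.smul hW').norm
            simpa using this
        rw [show (0:ℝ) + l t + 0 = l t by ring] at hcten
        have hev : ∀ᶠ j in atTop, c j < l t + ε :=
          hcten.eventually_lt_const (by linarith)
        obtain ⟨j, hj⟩ := hev.exists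
        linarith [hkey j]
    -- combine
    rw [eventually_nhdsWithin_iff] at hlower hupper ⊢
    have hltb : ∀ᶠ s in nhds t, s < t₂ := eventually_lt_nhds ht.2
    filter_upwards [hlower, hupper, hltb] with s hs1 hs2 hs3 hsIoi
    have hsIoo : s ∈ Set.Ioo t t₂ := ⟨hsIoi, hs3⟩
    have := hs1 hsIoo
    have := hs2 hsIoo
    rw [Real.dist_eq, abs_sub_lt_iff]
    constructor <;> simp only [hldef] at * <;> linarith
end

section
/- Let U ⊆ ℝⁿ be open, let J(t) ⊆ U for t ∈ [0,T] be a family of nonempty closed convex sets whose space-time track L is closed in ℝⁿ × ℝ, and assume (F(v,t),1) ∈ C_{(v,t)}L for every point (v,t) of the topological boundary ∂L of L in ℝ^{n+1} with t ∈ [0,T), where F : U × [0,T] → ℝⁿ is continuous in t and Lipschitz in its first variable with Lipschitz constant C. Let τ be a solution of the ODE dτ/dt = F(τ,t) on [t₁,t₂] ⊆ [0,T] with τ(t₁) ∈ J(t₁) and τ(t) ∉ J(t) for all t ∈ (t₁,t₂], and set l(t) = dist(τ(t), J(t)). Then for every t ∈ (t₁,t₂) one has d⁺l(t) ≤ C·l(t).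 -/
open Filter Set

theorem stmt_10 (n : ℕ) (U : Set (EuclideanSpace ℝ (Fin n))) (hU : IsOpen U)
    (T : ℝ) (hT : 0 < T)
    (J : ℝ → Set (EuclideanSpace ℝ (Fin n)))
    (hJ : ∀ t ∈ Set.Icc (0 : ℝ) T,
      J t ⊆ U ∧ (J t).Nonempty ∧ IsClosed (J t) ∧ Convex ℝ (J t))
    (htrack : IsClosed (spaceTimeTrack J T))
    (F : EuclideanSpace ℝ (Fin n) → ℝ → EuclideanSpace ℝ (Fin n))
    (C : NNReal)
    (hFt : ∀ v ∈ U, ContinuousOn (fun t => F v t) (Set.Icc 0 T))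
    (hFlip : ∀ t ∈ Set.Icc (0 : ℝ) T, LipschitzOnWith C (fun v => F v t) U)
    (hcone : ∀ v : EuclideanSpace ℝ (Fin n), ∀ t ∈ Set.Ico (0 : ℝ) T,
      (v, t) ∈ frontier (spaceTimeTrack J T) →
      inTimelikeTangentCone J v t (F v t))
    (t₁ t₂ : ℝ) (ht₁ : 0 ≤ t₁) (ht₁₂ : t₁ < t₂) (ht₂ : t₂ ≤ T)
    (τ : ℝ → EuclideanSpace ℝ (Fin n))
    (hτU : ∀ t ∈ Set.Icc t₁ t₂, τ t ∈ U)
    (hτode : ∀ t ∈ Set.Icc t₁ t₂, HasDerivWithinAt τ (F (τ t) t) (Set.Icc t₁ t₂) t)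
    (hτin : τ t₁ ∈ J t₁)
    (hτout : ∀ t ∈ Set.Ioc t₁ t₂, τ t ∉ J t) :
    ∀ t ∈ Set.Ioo t₁ t₂,
      upperForwardDeriv (fun t => Metric.infDist (τ t) (J t)) t ≤
        (((C : ℝ) * Metric.infDist (τ t) (J t) : ℝ) : EReal) := by

  intro t ht
  obtain ⟨ht1, ht2⟩ := ht
  have htIcc : t ∈ Set.Icc t₁ t₂ := ⟨ht1.le, ht2.le⟩
  have ht0T : t ∈ Set.Icc (0:ℝ) T := ⟨ht₁.trans ht1.le, ht2.le.trans ht₂⟩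
  obtain ⟨hJU, hJne, hJcl, -⟩ := hJ t ht0T
  set x := τ t with hxdef
  have hxU : x ∈ U := hτU t htIcc
  have hxnot : x ∉ J t := hτout t ⟨ht1, ht2.le⟩
  set l := Metric.infDist x (J t) with hldef
  obtain ⟨v, hvJ, hvd⟩ := hJcl.exists_infDist_eq_dist hJne x
  have hlpos : 0 < l := (hJcl.notMem_iff_infDist_pos hJne).mp hxnot
  have hvU : v ∈ U := hJU hvJ
  -- (v, t) is on the frontier of the track
  have hfront : ((v, t) : EuclideanSpace ℝ (Fin n) × ℝ) ∈ frontier (spaceTimeTrack J T) := by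
    rw [frontier_eq_closure_inter_closure]
    constructor
    · exact subset_closure ⟨hvJ, ht0T⟩
    · -- sequence outside the track converging to (v,t)
      set y : ℕ → EuclideanSpace ℝ (Fin n) := fun k => v + (1 / ((k:ℝ) + 1)) • (x - v) with hy
      have hyt : Filter.Tendsto (fun k => ((y k, t) : EuclideanSpace ℝ (Fin n) × ℝ))
          Filter.atTop (nhds (v, t)) := by
        have h1 : Filter.Tendsto y Filter.atTop (nhds v) := by
          have := (tendsto_one_div_add_atTop_nhds_zero_nat (𝕜 := ℝ)).smul_const (x - v)
          simpa [hy] using (tendsto_const_nhds (x := v)).add this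
        exact h1.prodMk_nhds tendsto_const_nhds
      refine mem_closure_of_tendsto hyt (Filter.Eventually.of_forall fun k => ?_)
      intro hk
      have hmem : y k ∈ J t := hk.1
      have hθpos : (0:ℝ) < 1 / ((k:ℝ) + 1) := by positivity
      have hθle : (1 / ((k:ℝ) + 1) : ℝ) ≤ 1 := by
        rw [div_le_one (by positivity)]; linarith [Nat.cast_nonneg (α := ℝ) k]
      set θ : ℝ := 1 / ((k:ℝ) + 1)
      have hdist : dist x (y k) = (1 - θ) * l := by
        have hcalc : x - (v + θ • (x - v)) = (1 - θ) • (x - v) := by module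
        rw [dist_eq_norm, hy]
        simp only []
        rw [hcalc, norm_smul, Real.norm_eq_abs, abs_of_nonneg (by linarith)]
        rw [hldef, hvd, dist_eq_norm]
      have hle : l ≤ (1 - θ) * l := by
        rw [hldef]
        calc Metric.infDist x (J t) ≤ dist x (y k) := Metric.infDist_le_dist_of_mem hmem
          _ = (1 - θ) * l := hdist
      nlinarith
  -- tangent cone hypothesis at (v, t)
  have hconeV : inTimelikeTangentCone J v t (F v t) :=
    hcone v t ⟨ht₁.trans ht1.le, lt_of_lt_of_le ht2 ht₂⟩ hfront
  -- derivative of τ at t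
  have hD : HasDerivAt τ (F x t) t := (hτode t htIcc).hasDerivAt (Icc_mem_nhds ht1 ht2)
  have hLO : (fun h => τ (t + h) - τ t - h • F x t) =o[nhds 0] fun h => h :=
    hasDerivAt_iff_isLittleO_nhds_zero.mp hD
  -- Lipschitz bound
  have hlip : ‖F x t - F v t‖ ≤ (C:ℝ) * l := by
    have := (hFlip t ht0T).dist_le_mul x hxU v hvU
    rw [dist_eq_norm] at this
    calc ‖F x t - F v t‖ = dist (F x t) (F v t) := (dist_eq_norm _ _).symm
      _ ≤ (C:ℝ) * dist x v := (hFlip t ht0T).dist_le_mul x hxU v hvU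
      _ = (C:ℝ) * l := by rw [← hvd]
  -- main limsup argument by contradiction
  rw [upperForwardDeriv]
  by_contra hcon
  push_neg at hcon
  obtain ⟨β, hβ1, hβ2⟩ := EReal.lt_iff_exists_real_btwn.mp hcon
  have hClβ : (C:ℝ) * l < β := by exact_mod_cast hβ1
  have hfreq := Filter.frequently_lt_of_lt_limsup (by isBoundedDefault) hβ2
  have hfreq2 : ∃ᶠ s in nhdsWithin (0:ℝ) (Set.Ioi 0),
      s ∈ Set.Ioi (0:ℝ) ∧ β < (Metric.infDist (τ (t + s)) (J (t + s)) - l) / s := by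
    refine eventually_mem_nhdsWithin.and_frequently (hfreq.mono fun s hs => ?_)
    exact_mod_cast hs
  obtain ⟨s, hstend, hsprop⟩ := Filter.exists_seq_forall_of_frequently hfreq2
  have hspos : ∀ i, 0 < s i := fun i => (hsprop i).1
  have hs0 : Filter.Tendsto s Filter.atTop (nhds 0) := hstend.mono_right nhdsWithin_le_nhds
  obtain ⟨φ, hφ, W', hW't, hW'mem⟩ := hconeV s hspos hs0
  set ε : ℝ := (β - (C:ℝ) * l) / 3 with hε
  have hεpos : 0 < ε := by rw [hε]; linarith
  -- eventually ‖F x t - W' j‖ < C*l + ε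
  have hWlim : Filter.Tendsto (fun j => ‖F x t - W' j‖) Filter.atTop
      (nhds ‖F x t - F v t‖) :=
    ((tendsto_const_nhds.sub hW't).norm)
  have hWev : ∀ᶠ j in Filter.atTop, ‖F x t - W' j‖ < (C:ℝ) * l + ε :=
    hWlim.eventually_lt_const (by linarith)
  -- eventually the remainder is small
  have hsφ : Filter.Tendsto (fun j => s (φ j)) Filter.atTop (nhds 0) :=
    hs0.comp hφ.tendsto_atTop
  have hrem : ∀ᶠ j in Filter.atTop,
      ‖τ (t + s (φ j)) - τ t - s (φ j) • F x t‖ ≤ ε * ‖s (φ j)‖ :=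
    hsφ.eventually (hLO.def hεpos)
  obtain ⟨j, hWj, hrj⟩ := (hWev.and hrem).exists
  set σ : ℝ := s (φ j) with hσ
  have hσpos : 0 < σ := hspos (φ j)
  have hβj : β < (Metric.infDist (τ (t + σ)) (J (t + σ)) - l) / σ := (hsprop (φ j)).2
  set r : EuclideanSpace ℝ (Fin n) := τ (t + σ) - τ t - σ • F x t with hr
  have hrnorm : ‖r‖ ≤ ε * σ := by
    have := hrj
    rwa [Real.norm_eq_abs, abs_of_pos hσpos] at this
  have hkey : Metric.infDist (τ (t + σ)) (J (t + σ)) ≤ l + σ * ‖F x t - W' j‖ + ‖r‖ := by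
    have hmem : v + σ • W' j ∈ J (t + σ) := hW'mem j
    have h1 : Metric.infDist (τ (t + σ)) (J (t + σ)) ≤ dist (τ (t + σ)) (v + σ • W' j) :=
      Metric.infDist_le_dist_of_mem hmem
    have hdec : τ (t + σ) - (v + σ • W' j) = (x - v) + σ • (F x t - W' j) + r := by
      rw [hr, hxdef]; module
    have h2 : dist (τ (t + σ)) (v + σ • W' j) ≤ l + σ * ‖F x t - W' j‖ + ‖r‖ := by
      rw [dist_eq_norm, hdec]
      have hxv : ‖x - v‖ = l := by rw [hldef, hvd, dist_eq_norm]
      calc ‖(x - v) + σ • (F x t - W' j) + r‖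
          ≤ ‖(x - v) + σ • (F x t - W' j)‖ + ‖r‖ := norm_add_le _ _
        _ ≤ ‖x - v‖ + ‖σ • (F x t - W' j)‖ + ‖r‖ := by linarith [norm_add_le (x - v) (σ • (F x t - W' j))]
        _ = l + σ * ‖F x t - W' j‖ + ‖r‖ := by
            rw [hxv, norm_smul, Real.norm_eq_abs, abs_of_pos hσpos]
    exact h1.trans h2
  have hfinal : (Metric.infDist (τ (t + σ)) (J (t + σ)) - l) / σ ≤ ‖F x t - W' j‖ + ε := by
    rw [div_le_iff₀ hσpos]
    have : ε * σ = σ * ε := mul_comm _ _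
    nlinarith [hrnorm, hkey]
  have : β < (C:ℝ) * l + 2 * ε := lt_of_lt_of_le hβj (by linarith)
  rw [hε] at this
  linarith
end

section
/- Let U ⊆ ℝⁿ be open, let J(t) ⊆ U for t ∈ [0,T] be a family of nonempty closed convex sets, and let B(t) ⊆ J(t) be subsets such that both the space-time track L and the avoidance space-time track BL = {(v,t) ∈ ℝⁿ × ℝ : v ∈ B(t), 0 ≤ t ≤ T} are closed in ℝⁿ × ℝ. Let F : U × [0,T] → ℝⁿ be continuous in t and uniformly Lipschitz in its first variable. Suppose that (F(v,t),1) ∈ C_{(v,t)}L for every point (v,t) ∈ (∂L) \ (BL) with t ∈ [0,T), where ∂L is the topological boundary of L in ℝ^{n+1}. Then for every t₀ ∈ [0,T) and every solution τ of the ODE dτ/dt = F(τ,t) on [t₀,T] with τ(t₀) ∈ J(t₀) \ B(t₀), either τ(t) ∈ J(t) for all t ∈ [t₀,T], or there is a time t₁ ∈ (t₀,T] such that τ(t) ∈ J(t) \ B(t) for all t ∈ [t₀,t₁) and τ(t₁) ∈ B(t₁). -/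
set_option maxHeartbeats 2000000


open Filter Set

lemma tendsto_div_add_two (c : ℝ) : Tendsto (fun i : ℕ => c / ((i : ℝ) + 2)) atTop (nhds 0) := by
  have h1 := tendsto_const_div_atTop_nhds_zero_nat c
  have h2 : Tendsto (fun i : ℕ => i + 2) atTop atTop := tendsto_add_atTop_nat 2
  have h3 := h1.comp h2
  have he : (fun i : ℕ => c / ((i : ℝ) + 2)) = (fun n : ℕ => c / (n : ℝ)) ∘ (fun i => i + 2) := by
    funext i; simp only [Function.comp]; push_cast; ring
  rw [he]; exact h3

lemma gronwallBound_le_mul {C ε y δ₀ : ℝ} (hC : 0 ≤ C) (hε : 0 ≤ ε) (hy : 0 ≤ y) (h : y ≤ δ₀) :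
    gronwallBound 0 C ε y ≤ ε * gronwallBound 0 C 1 δ₀ := by
  rcases eq_or_lt_of_le hC with hC0 | hCpos
  · subst hC0
    simp only [gronwallBound, if_pos rfl, zero_add]
    calc ε * y ≤ ε * δ₀ := mul_le_mul_of_nonneg_left h hε
    _ = ε * (1 * δ₀) := by ring
  · have hCne : C ≠ 0 := ne_of_gt hCpos
    rw [gronwallBound_of_K_ne_0 hCne, gronwallBound_of_K_ne_0 hCne]
    have h1 : Real.exp (C * y) - 1 ≤ Real.exp (C * δ₀) - 1 := by
      have := Real.exp_le_exp.mpr (mul_le_mul_of_nonneg_left h hC)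
      linarith
    have h3 : ε / C * (Real.exp (C * y) - 1) ≤ ε / C * (Real.exp (C * δ₀) - 1) :=
      mul_le_mul_of_nonneg_left h1 (div_nonneg hε hCpos.le)
    calc 0 * Real.exp (C * y) + ε / C * (Real.exp (C * y) - 1)
        = ε / C * (Real.exp (C * y) - 1) := by ring
      _ ≤ ε / C * (Real.exp (C * δ₀) - 1) := h3
      _ = ε * (0 * Real.exp (C * δ₀) + 1 / C * (Real.exp (C * δ₀) - 1)) := by ring

lemma gronwallBound_one_pos {C δ₀ : ℝ} (hC : 0 ≤ C) (h : 0 < δ₀) :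
    0 < gronwallBound 0 C 1 δ₀ := by
  rcases eq_or_lt_of_le hC with hC0 | hCpos
  · subst hC0
    simp only [gronwallBound, if_pos rfl, zero_add, one_mul]
    exact h
  · rw [gronwallBound_of_K_ne_0 (ne_of_gt hCpos)]
    have : 1 < Real.exp (C * δ₀) := Real.one_lt_exp_iff.mpr (by positivity)
    have := div_pos (by linarith : (0:ℝ) < Real.exp (C * δ₀) - 1) hCpos
    calc (0:ℝ) < (Real.exp (C * δ₀) - 1) / C := this
      _ = 0 * Real.exp (C * δ₀) + 1 / C * (Real.exp (C * δ₀) - 1) := by ring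

lemma localStep {n : ℕ} {U : Set (EuclideanSpace ℝ (Fin n))} (hU : IsOpen U)
    {T : ℝ} {J B : ℝ → Set (EuclideanSpace ℝ (Fin n))}
    (hJ : ∀ t ∈ Set.Icc (0 : ℝ) T,
      J t ⊆ U ∧ (J t).Nonempty ∧ IsClosed (J t) ∧ Convex ℝ (J t))
    (htrack : IsClosed (spaceTimeTrack J T))
    (hBtrack : IsClosed (spaceTimeTrack B T))
    {F : EuclideanSpace ℝ (Fin n) → ℝ → EuclideanSpace ℝ (Fin n)}
    (hFt : ∀ v ∈ U, ContinuousOn (fun t => F v t) (Set.Icc 0 T))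
    {C : NNReal} (hFlip : ∀ t ∈ Set.Icc (0 : ℝ) T, LipschitzOnWith C (fun v => F v t) U)
    (hcone : ∀ v : EuclideanSpace ℝ (Fin n), ∀ t ∈ Set.Ico (0 : ℝ) T,
      (v, t) ∈ frontier (spaceTimeTrack J T) \ spaceTimeTrack B T →
      inTimelikeTangentCone J v t (F v t))
    {t₀ t₂ : ℝ} (ht₀0 : 0 ≤ t₀) (ht₂T : t₂ ≤ T)
    {τ : ℝ → EuclideanSpace ℝ (Fin n)} (hτU : ∀ t ∈ Set.Icc t₀ T, τ t ∈ U)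
    (hderiv : ∀ t ∈ Set.Icc t₀ T, HasDerivWithinAt τ (F (τ t) t) (Set.Icc t₀ T) t)
    (havoid : ∀ t ∈ Set.Ico t₀ t₂, τ t ∉ B t)
    {m : ℝ} (hm₀ : t₀ ≤ m) (hm₂ : m < t₂) (hmJ : τ m ∈ J m) :
    ∃ δ : ℝ, 0 < δ ∧ m + δ < t₂ ∧ ∀ t ∈ Set.Icc m (m + δ), τ t ∈ J t := by
  have hmT : m < T := lt_of_lt_of_le hm₂ ht₂T
  have hm0 : (0:ℝ) ≤ m := le_trans ht₀0 hm₀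
  have hT0 : (0:ℝ) ≤ T := le_trans hm0 hmT.le
  have hτcont : ContinuousOn τ (Set.Icc t₀ T) := fun t ht => (hderiv t ht).continuousWithinAt
  have hLne : (spaceTimeTrack J T).Nonempty := by
    obtain ⟨w, hw⟩ := (hJ 0 ⟨le_refl 0, hT0⟩).2.1
    exact ⟨(w, 0), hw, le_refl 0, hT0⟩
  have hmB : (τ m, m) ∉ spaceTimeTrack B T := fun h => havoid m ⟨hm₀, hm₂⟩ h.1
  obtain ⟨r_B, hrB_pos, hrB⟩ : ∃ r > 0, Metric.ball ((τ m, m)) r ⊆ (spaceTimeTrack B T)ᶜ :=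
    Metric.mem_nhds_iff.mp (hBtrack.isOpen_compl.mem_nhds hmB)
  have hτmU : τ m ∈ U := hτU m ⟨hm₀, hmT.le⟩
  obtain ⟨ρ, hρ_pos, hρU⟩ : ∃ ρ > 0, Metric.closedBall (τ m) ρ ⊆ U := by
    obtain ⟨ρ', hρ'pos, h⟩ := Metric.mem_nhds_iff.mp (hU.mem_nhds hτmU)
    exact ⟨ρ'/2, by positivity,
      subset_trans (Metric.closedBall_subset_ball (by linarith)) h⟩
  have hFcont : ContinuousOn (fun p : EuclideanSpace ℝ (Fin n) × ℝ => F p.1 p.2)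
      (U ×ˢ Set.Icc 0 T) :=
    continuousOn_prod_of_continuousOn_lipschitzOnWith _ C hFt hFlip
  have hFuc := ((isCompact_closedBall (τ m) ρ).prod isCompact_Icc).uniformContinuousOn_of_continuous
      (hFcont.mono (Set.prod_mono hρU Set.Subset.rfl))
  have hτcurve : ContinuousOn (fun t => F (τ t) t) (Set.Icc t₀ T) := by
    have hmap : Set.MapsTo (fun t => (τ t, t)) (Set.Icc t₀ T) (U ×ˢ Set.Icc 0 T) :=
      fun t ht => ⟨hτU t ht, le_trans ht₀0 ht.1, ht.2⟩
    exact hFcont.comp (hτcont.prodMk continuousOn_id) hmap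
  obtain ⟨M₀, hM₀⟩ := (isCompact_Icc (a := t₀) (b := T)).exists_bound_of_continuousOn hτcurve
  set M := max M₀ 0 with hM
  have hM0 : 0 ≤ M := le_max_right _ _
  have hspeed : ∀ t ∈ Set.Icc t₀ T, ‖F (τ t) t‖ ≤ M := fun t ht =>
    (hM₀ t ht).trans (le_max_left _ _)
  have hτlip : ∀ a ∈ Set.Icc t₀ T, ∀ b ∈ Set.Icc t₀ T, ‖τ b - τ a‖ ≤ M * |b - a| := by
    intro a ha b hb
    have := Convex.norm_image_sub_le_of_norm_hasDerivWithin_le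
      (f := τ) (f' := fun t => F (τ t) t) hderiv hspeed (convex_Icc t₀ T) ha hb
    simpa [Real.norm_eq_abs] using this
  set δ₀ := min ((t₂ - m)/2) (min (ρ/(2*(M+1))) (r_B/(4*(M+1)))) with hδ₀def
  have hδ₀pos : 0 < δ₀ := by
    apply lt_min (by linarith)
    exact lt_min (by positivity) (by positivity)
  have hδ₀1 : δ₀ ≤ (t₂ - m)/2 := min_le_left _ _
  have hδ₀2 : δ₀ ≤ ρ/(2*(M+1)) := le_trans (min_le_right _ _) (min_le_left _ _)
  have hδ₀3 : δ₀ ≤ r_B/(4*(M+1)) := le_trans (min_le_right _ _) (min_le_right _ _)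
  have hmδt₂ : m + δ₀ < t₂ := by linarith
  have hmδT : m + δ₀ < T := lt_of_lt_of_le hmδt₂ ht₂T
  have hMδρ : M * δ₀ ≤ ρ/2 := by
    have h1 : M * δ₀ ≤ (M+1) * δ₀ := mul_le_mul_of_nonneg_right (by linarith) hδ₀pos.le
    have h2 : (M+1) * δ₀ ≤ (M+1) * (ρ/(2*(M+1))) :=
      mul_le_mul_of_nonneg_left hδ₀2 (by linarith)
    have h3 : (M+1) * (ρ/(2*(M+1))) = ρ/2 := by field_simp
    linarith
  have hMδr : M * δ₀ ≤ r_B/4 := by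
    have h1 : M * δ₀ ≤ (M+1) * δ₀ := mul_le_mul_of_nonneg_right (by linarith) hδ₀pos.le
    have h2 : (M+1) * δ₀ ≤ (M+1) * (r_B/(4*(M+1))) :=
      mul_le_mul_of_nonneg_left hδ₀3 (by linarith)
    have h3 : (M+1) * (r_B/(4*(M+1))) = r_B/4 := by field_simp
    linarith
  have hδr : δ₀ ≤ r_B/4 := by
    have h1 : r_B/(4*(M+1)) ≤ r_B/4 :=
      div_le_div_of_nonneg_left hrB_pos.le (by linarith) (by linarith)
    linarith
  set η := min (ρ/2) (r_B/4) with hηdef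
  have hηpos : 0 < η := lt_min (by positivity) (by positivity)
  have hηρ : η ≤ ρ/2 := min_le_left _ _
  have hηr : η ≤ r_B/4 := min_le_right _ _
  set Ψ := gronwallBound 0 (C:ℝ) 1 δ₀ with hΨdef
  have hΨpos : 0 < Ψ := gronwallBound_one_pos C.coe_nonneg hδ₀pos
  have key : ∀ ε : ℝ, 0 < ε → ε * Ψ < η → ∀ x ∈ Set.Icc m (m+δ₀),
      Metric.infDist ((τ x, x)) (spaceTimeTrack J T) ≤ ε * Ψ := by
    intro ε hε hεη
    obtain ⟨δu, hδu_pos, hδu⟩ := Metric.uniformContinuousOn_iff.mp hFuc (ε/2) (by positivity)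
    set lam := max 1 (max (2*η/δu) (2*η/(T - (m+δ₀)))) with hlamdef
    have hlam1 : (1:ℝ) ≤ lam := le_max_left _ _
    have hlam0 : 0 < lam := lt_of_lt_of_le one_pos hlam1
    have hTm : 0 < T - (m+δ₀) := by linarith
    have hβδu : η / lam < δu := by
      have h1 : 2*η/δu ≤ lam := le_trans (le_max_left _ _) (le_max_right _ _)
      have h2 : 2*η ≤ δu * lam := by
        have hmul := mul_le_mul_of_nonneg_left h1 hδu_pos.le
        calc 2*η = δu * (2*η/δu) := by field_simp
        _ ≤ δu * lam := hmul
      rw [div_lt_iff₀ hlam0]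
      linarith
    have hβT : m + δ₀ + η/lam < T := by
      have h1 : 2*η/(T - (m+δ₀)) ≤ lam := le_trans (le_max_right _ _) (le_max_right _ _)
      have h2 : 2*η ≤ (T - (m+δ₀)) * lam := by
        have hmul := mul_le_mul_of_nonneg_left h1 hTm.le
        calc 2*η = (T - (m+δ₀)) * (2*η/(T - (m+δ₀))) := by field_simp
        _ ≤ (T - (m+δ₀)) * lam := hmul
      have h3 : η/lam < T - (m+δ₀) := by
        rw [div_lt_iff₀ hlam0]; linarith
      linarith
    have hβη : η / lam ≤ η := by
      apply div_le_self hηpos.le hlam1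
    set Lsc := (fun q : EuclideanSpace ℝ (Fin n) × ℝ => (q.1, lam * q.2)) '' spaceTimeTrack J T
      with hLscdef
    have hLsc_closed : IsClosed Lsc := by
      have hset : Lsc = (fun q : EuclideanSpace ℝ (Fin n) × ℝ => (q.1, lam⁻¹ * q.2)) ⁻¹'
          (spaceTimeTrack J T) := by
        ext q
        constructor
        · rintro ⟨p, hp, rfl⟩
          simpa [inv_mul_cancel_left₀ (ne_of_gt hlam0)] using hp
        · intro hq
          exact ⟨(q.1, lam⁻¹ * q.2), hq, by simp [mul_inv_cancel_left₀ (ne_of_gt hlam0)]⟩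
      rw [hset]
      exact htrack.preimage (by fun_prop)
    have hLsc_ne : Lsc.Nonempty := hLne.image _
    set g : ℝ → ℝ := fun t => Metric.infDist ((τ t, lam * t)) Lsc with hgdef
    have hgnn : ∀ t, 0 ≤ g t := fun t => Metric.infDist_nonneg
    have hgcont : ContinuousOn g (Set.Icc t₀ T) :=
      (Metric.continuous_infDist_pt Lsc).comp_continuousOn
        (hτcont.prodMk ((continuous_const.mul continuous_id).continuousOn))
    have hdist_eq : ∀ (a b : ℝ), dist (lam * a) (lam * b) = lam * |a - b| := by
      intro a b
      rw [Real.dist_eq, ← mul_sub, abs_mul, abs_of_pos hlam0]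
    have hgle : ∀ (t : ℝ) (w : EuclideanSpace ℝ (Fin n)) (r : ℝ),
        (w, r) ∈ spaceTimeTrack J T → g t ≤ max ‖τ t - w‖ (lam * |t - r|) := by
      intro t w r hwr
      have hmem : ((w, lam * r) : EuclideanSpace ℝ (Fin n) × ℝ) ∈ Lsc := ⟨(w, r), hwr, rfl⟩
      have h := Metric.infDist_le_dist_of_mem (x := ((τ t, lam * t))) hmem
      rw [Prod.dist_eq, hdist_eq, dist_eq_norm] at h
      exact h
    have hgm : g m = 0 := by
      refine le_antisymm ?_ (hgnn m)
      have := hgle m (τ m) m ⟨hmJ, hm0, hmT.le⟩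
      simpa using this
    set f : ℝ → ℝ := fun t => min (g t) η with hfdef
    have hsub : Set.Icc m (m+δ₀) ⊆ Set.Icc t₀ T := Set.Icc_subset_Icc hm₀ hmδT.le
    have hfcont : ContinuousOn f (Set.Icc m (m+δ₀)) :=
      continuous_min.comp_continuousOn ((hgcont.mono hsub).prodMk continuousOn_const)
    have hfnn : ∀ t, 0 ≤ f t := fun t => le_min (hgnn t) hηpos.le
    have hfm : f m ≤ 0 := by simp [hfdef, hgm]
    have hslope : ∀ x ∈ Set.Ico m (m+δ₀), ∀ r, (C:ℝ) * f x + ε/2 < r →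
        ∃ᶠ z in nhdsWithin x (Set.Ioi x), (z - x)⁻¹ * (f z - f x) < r := by
      intro x hx r hr
      obtain ⟨hmx, hxδ⟩ := hx
      have hxT : x < T := lt_trans hxδ hmδT
      have hxt₂ : x < t₂ := lt_trans hxδ hmδt₂
      have hxIccT : x ∈ Set.Icc t₀ T := ⟨le_trans hm₀ hmx, hxT.le⟩
      have hx0T : x ∈ Set.Icc (0:ℝ) T := ⟨le_trans hm0 hmx, hxT.le⟩
      have hrε : 0 < r :=
        lt_of_le_of_lt (add_nonneg (mul_nonneg C.coe_nonneg (hfnn x)) (by positivity)) hr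
      by_cases hgη : η < g x
      · apply Filter.Eventually.frequently
        filter_upwards [self_mem_nhdsWithin] with z hz
        have hzx : x < z := hz
        have hfz : f z - f x ≤ 0 := by
          have h1 : f z ≤ η := min_le_right _ _
          have h2 : f x = η := min_eq_right hgη.le
          linarith
        have hinv : 0 ≤ (z - x)⁻¹ := le_of_lt (inv_pos.mpr (by linarith))
        have hmul : (z - x)⁻¹ * (f z - f x) ≤ (z - x)⁻¹ * 0 :=
          mul_le_mul_of_nonneg_left hfz hinv
        rw [mul_zero] at hmul
        linarith
      · push_neg at hgη
        have hfx : f x = g x := min_eq_left hgη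
        by_cases hint : ((τ x, x) : EuclideanSpace ℝ (Fin n) × ℝ) ∈
            interior (spaceTimeTrack J T)
        · have hgx0 : g x = 0 := by
            refine le_antisymm ?_ (hgnn x)
            have := hgle x (τ x) x (interior_subset hint)
            simpa using this
          have hcont : ContinuousWithinAt (fun z => ((τ z, z) : EuclideanSpace ℝ (Fin n) × ℝ))
              (Set.Icc t₀ T) x := (hτcont.prodMk continuousOn_id) x hxIccT
          have hev₀ : ∀ᶠ z in nhdsWithin x (Set.Icc t₀ T),
              ((τ z, z) : EuclideanSpace ℝ (Fin n) × ℝ) ∈ interior (spaceTimeTrack J T) :=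
            hcont (isOpen_interior.mem_nhds hint)
          have hle : nhdsWithin x (Set.Ioc x T) ≤ nhdsWithin x (Set.Icc t₀ T) :=
            nhdsWithin_mono _ (fun z hz => ⟨le_trans hxIccT.1 hz.1.le, hz.2⟩)
          have hev₁ := hev₀.filter_mono hle
          rw [nhdsWithin_Ioc_eq_nhdsGT hxT] at hev₁
          apply Filter.Eventually.frequently
          filter_upwards [hev₁] with z hz1
          have hgz : g z = 0 := by
            refine le_antisymm ?_ (hgnn z)
            have := hgle z (τ z) z (interior_subset hz1)
            simpa using this
          have : f z - f x = 0 := by simp [hfdef, hgz, hgx0, hηpos.le]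
          rw [this, mul_zero]
          exact hrε
        · have hdata : ∃ (v : EuclideanSpace ℝ (Fin n)) (s : ℝ),
              (v, s) ∈ spaceTimeTrack J T ∧ ‖τ x - v‖ ≤ g x ∧ lam * |x - s| ≤ g x ∧
              (v, s) ∈ frontier (spaceTimeTrack J T) := by
            rcases eq_or_lt_of_le (hgnn x) with hg0 | hgpos
            · have hmemsc : ((τ x, lam * x) : EuclideanSpace ℝ (Fin n) × ℝ) ∈ Lsc :=
                (hLsc_closed.mem_iff_infDist_zero hLsc_ne).mpr hg0.symm
              obtain ⟨p, hp, hpe⟩ := hmemsc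
              have hp1 : p.1 = τ x := congrArg Prod.fst hpe
              have hp2 : p.2 = x := by
                have := congrArg Prod.snd hpe
                exact mul_left_cancel₀ (ne_of_gt hlam0) this
              have hpxx : p = (τ x, x) := Prod.ext hp1 hp2
              rw [hpxx] at hp
              refine ⟨τ x, x, hp, by simp [← hg0], by simp [← hg0], ?_⟩
              exact ⟨subset_closure hp, hint⟩
            · obtain ⟨q, hqL, hq⟩ := hLsc_closed.exists_infDist_eq_dist hLsc_ne ((τ x, lam * x))
              obtain ⟨p, hpL, rfl⟩ := hqL
              have hdmax : max ‖τ x - p.1‖ (lam * |x - p.2|) = g x := by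
                rw [hgdef]
                simp only
                rw [hq, Prod.dist_eq, hdist_eq, dist_eq_norm]
              have h1 : ‖τ x - p.1‖ ≤ g x := hdmax ▸ le_max_left _ _
              have h2 : lam * |x - p.2| ≤ g x := hdmax ▸ le_max_right _ _
              refine ⟨p.1, p.2, hpL, h1, h2, ?_⟩
              refine ⟨subset_closure hpL, fun hintp => ?_⟩
              obtain ⟨δb, hδb_pos, hδb⟩ :=
                Metric.mem_nhds_iff.mp (mem_interior_iff_mem_nhds.mp hintp)
              set θ := min (1/2 : ℝ) (δb/(2*(g x + 1))) with hθdef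
              have hθpos : 0 < θ := lt_min one_half_pos (by positivity)
              have hθhalf : θ ≤ 1/2 := min_le_left _ _
              have hθδb : θ ≤ δb/(2*(g x + 1)) := min_le_right _ _
              have hxp2 : |x - p.2| ≤ g x := by
                calc |x - p.2| ≤ lam * |x - p.2| := le_mul_of_one_le_left (abs_nonneg _) hlam1
                _ ≤ g x := h2
              have hpθL : ((p.1 + θ • (τ x - p.1), p.2 + θ * (x - p.2)) :
                  EuclideanSpace ℝ (Fin n) × ℝ) ∈ spaceTimeTrack J T := by
                apply hδb
                rw [Metric.mem_ball, Prod.dist_eq]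
                have e1 : dist (p.1 + θ • (τ x - p.1)) p.1 = θ * ‖τ x - p.1‖ := by
                  rw [dist_eq_norm]
                  simp only [add_sub_cancel_left]
                  rw [norm_smul, Real.norm_eq_abs, abs_of_pos hθpos]
                have e2 : dist (p.2 + θ * (x - p.2)) p.2 = θ * |x - p.2| := by
                  rw [Real.dist_eq]
                  simp only [add_sub_cancel_left]
                  rw [abs_mul, abs_of_pos hθpos]
                rw [e1, e2]
                have hb1 : θ * ‖τ x - p.1‖ < δb := by
                  have : θ * ‖τ x - p.1‖ ≤ θ * g x := mul_le_mul_of_nonneg_left h1 hθpos.le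
                  have h4 : θ * g x < δb := by
                    have hle : θ * g x ≤ δb/(2*(g x + 1)) * (g x + 1) :=
                      mul_le_mul hθδb (by linarith) (hgnn x) (by positivity)
                    have heq : δb/(2*(g x + 1)) * (g x + 1) = δb/2 := by
                      have hne : g x + 1 ≠ 0 := by positivity
                      field_simp
                    linarith
                  linarith
                have hb2 : θ * |x - p.2| < δb := by
                  have : θ * |x - p.2| ≤ θ * g x := mul_le_mul_of_nonneg_left hxp2 hθpos.le
                  have h4 : θ * g x < δb := by
                    have hle : θ * g x ≤ δb/(2*(g x + 1)) * (g x + 1) :=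
                      mul_le_mul hθδb (by linarith) (hgnn x) (by positivity)
                    have heq : δb/(2*(g x + 1)) * (g x + 1) = δb/2 := by
                      have hne : g x + 1 ≠ 0 := by positivity
                      field_simp
                    linarith
                  linarith
                exact max_lt hb1 hb2
              have hcontr := hgle x _ _ hpθL
              have e1 : ‖τ x - (p.1 + θ • (τ x - p.1))‖ = (1-θ) * ‖τ x - p.1‖ := by
                have he : τ x - (p.1 + θ • (τ x - p.1)) = (1-θ) • (τ x - p.1) := by
                  rw [sub_smul, one_smul]; abel
                rw [he, norm_smul, Real.norm_eq_abs, abs_of_nonneg (by linarith)]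
              have e2 : lam * |x - (p.2 + θ * (x - p.2))| = (1-θ) * (lam * |x - p.2|) := by
                have he : x - (p.2 + θ * (x - p.2)) = (1-θ) * (x - p.2) := by ring
                rw [he, abs_mul, abs_of_nonneg (by linarith : (0:ℝ) ≤ 1-θ)]; ring
              rw [e1, e2] at hcontr
              have hmax : max ((1-θ) * ‖τ x - p.1‖) ((1-θ) * (lam * |x - p.2|)) ≤
                  (1-θ) * g x :=
                max_le (mul_le_mul_of_nonneg_left h1 (by linarith))
                  (mul_le_mul_of_nonneg_left h2 (by linarith))
              have hp : 0 < θ * g x := mul_pos hθpos hgpos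
              have hexp : (1-θ) * g x = g x - θ * g x := by ring
              linarith
          obtain ⟨v, s, hvsL, h1, h2, hfr⟩ := hdata
          obtain ⟨hvJ, hs0, hsT'⟩ : v ∈ J s ∧ 0 ≤ s ∧ s ≤ T := ⟨hvsL.1, hvsL.2.1, hvsL.2.2⟩
          have hxs : |x - s| ≤ η / lam := by
            rw [le_div_iff₀ hlam0]
            calc |x - s| * lam = lam * |x - s| := by ring
            _ ≤ g x := h2
            _ ≤ η := hgη
          have hsT : s < T := by
            have hsx : s - x ≤ |x - s| := by
              rw [abs_sub_comm]; exact le_abs_self _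
            have : s ≤ x + η/lam := by linarith
            linarith
          have hvU : v ∈ U := (hJ s ⟨hs0, hsT'⟩).1 hvJ
          have hτxm : ‖τ x - τ m‖ ≤ M * δ₀ := by
            have hl := hτlip m ⟨hm₀, hmT.le⟩ x hxIccT
            have habs : |x - m| ≤ δ₀ := by
              rw [abs_of_nonneg (by linarith)]; linarith
            calc ‖τ x - τ m‖ ≤ M * |x - m| := hl
            _ ≤ M * δ₀ := mul_le_mul_of_nonneg_left habs hM0
          have hvτx : ‖v - τ x‖ ≤ η := by
            rw [norm_sub_rev]; exact le_trans h1 hgη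
          have hvK : v ∈ Metric.closedBall (τ m) ρ := by
            rw [Metric.mem_closedBall, dist_eq_norm]
            calc ‖v - τ m‖ ≤ ‖v - τ x‖ + ‖τ x - τ m‖ := norm_sub_le_norm_sub_add_norm_sub _ _ _
            _ ≤ η + M * δ₀ := add_le_add hvτx hτxm
            _ ≤ ρ/2 + ρ/2 := add_le_add hηρ hMδρ
            _ = ρ := by ring
          have hvsB : ((v, s) : EuclideanSpace ℝ (Fin n) × ℝ) ∉ spaceTimeTrack B T := by
            intro hmem
            refine hrB ?_ hmem
            rw [Metric.mem_ball, Prod.dist_eq]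
            apply max_lt
            · rw [dist_eq_norm]
              calc ‖v - τ m‖ ≤ ‖v - τ x‖ + ‖τ x - τ m‖ := norm_sub_le_norm_sub_add_norm_sub _ _ _
              _ ≤ η + M * δ₀ := add_le_add hvτx hτxm
              _ ≤ r_B/4 + r_B/4 := add_le_add hηr hMδr
              _ < r_B := by linarith
            · rw [Real.dist_eq]
              have hsx : |s - x| = |x - s| := abs_sub_comm _ _
              calc |s - m| ≤ |s - x| + |x - m| := abs_sub_le _ _ _
              _ ≤ η/lam + δ₀ := by
                  rw [hsx]
                  apply add_le_add hxs
                  rw [abs_of_nonneg (by linarith)]; linarith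
              _ ≤ η + r_B/4 := add_le_add hβη hδr
              _ ≤ r_B/4 + r_B/4 := by linarith
              _ < r_B := by linarith
          have hconeV := hcone v s ⟨hs0, hsT⟩ ⟨hfr, hvsB⟩
          have hFdiff : ‖F (τ x) x - F v s‖ ≤ (C:ℝ) * g x + ε/2 := by
            have hl1 : ‖F (τ x) x - F v x‖ ≤ (C:ℝ) * g x := by
              have := (hFlip x hx0T).dist_le_mul (τ x) (hτU x hxIccT) v hvU
              rw [dist_eq_norm, dist_eq_norm] at this
              calc ‖F (τ x) x - F v x‖ ≤ (C:ℝ) * ‖τ x - v‖ := this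
              _ ≤ (C:ℝ) * g x := mul_le_mul_of_nonneg_left h1 C.coe_nonneg
            have hl2 : ‖F v x - F v s‖ ≤ ε/2 := by
              have hd : dist ((v, x) : EuclideanSpace ℝ (Fin n) × ℝ) ((v, s)) < δu := by
                rw [Prod.dist_eq, Real.dist_eq]
                apply max_lt
                · simpa using hδu_pos
                · exact lt_of_le_of_lt hxs hβδu
              have := hδu (v, x) ⟨hvK, hx0T⟩ (v, s) ⟨hvK, hs0, hsT'⟩ hd
              rw [dist_eq_norm] at this
              exact this.le
            calc ‖F (τ x) x - F v s‖ ≤ ‖F (τ x) x - F v x‖ + ‖F v x - F v s‖ :=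
              norm_sub_le_norm_sub_add_norm_sub _ _ _
            _ ≤ (C:ℝ) * g x + ε/2 := add_le_add hl1 hl2
          by_contra hcon
          rw [Filter.not_frequently] at hcon
          obtain ⟨u, hu, hIoo⟩ := mem_nhdsGT_iff_exists_Ioo_subset.mp hcon
          rw [Set.mem_Ioi] at hu
          set c := min (u - x) (min (T - x) (T - s)) with hcdef
          have hcpos : 0 < c := lt_min (by linarith) (lt_min (by linarith) (by linarith))
          have hcu : c ≤ u - x := min_le_left _ _
          have hcT : c ≤ T - x := le_trans (min_le_right _ _) (min_le_left _ _)
          have hcs : c ≤ T - s := le_trans (min_le_right _ _) (min_le_right _ _)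
          set sq : ℕ → ℝ := fun i => c / ((i : ℝ) + 2) with hsqdef
          have hsqpos : ∀ i, 0 < sq i := fun i => div_pos hcpos (by positivity)
          have hsqlim : Tendsto sq atTop (nhds 0) := tendsto_div_add_two c
          have hsqle : ∀ i, sq i ≤ c/2 := by
            intro i
            apply div_le_div_of_nonneg_left hcpos.le two_pos
            have : (0:ℝ) ≤ (i:ℝ) := Nat.cast_nonneg i
            linarith
          obtain ⟨φ, hφ, W', hW', hWmem⟩ := hconeV sq hsqpos hsqlim
          set h : ℕ → ℝ := fun j => sq (φ j) with hhdef
          have hhpos : ∀ j, 0 < h j := fun j => hsqpos _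
          have hhle : ∀ j, h j ≤ c/2 := fun j => hsqle _
          have hhlim : Tendsto h atTop (nhds 0) := hsqlim.comp hφ.tendsto_atTop
          set z : ℕ → ℝ := fun j => x + h j with hzdef
          have hzx : ∀ j, x < z j := fun j => by
            have := hhpos j; simp only [hzdef]; linarith
          have hzu : ∀ j, z j < u := fun j => by
            have := hhle j; simp only [hzdef]; linarith
          have hzT : ∀ j, z j ≤ T := fun j => by
            have := hhle j; simp only [hzdef]; linarith
          have hzIcc : ∀ j, z j ∈ Set.Icc t₀ T := fun j =>
            ⟨le_trans hxIccT.1 (hzx j).le, hzT j⟩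
          have hsh : ∀ j, s + h j ∈ Set.Icc (0:ℝ) T := fun j => by
            have h1' := hhpos j; have h2' := hhle j
            constructor
            · linarith
            · linarith
          have hmemL : ∀ j, ((v + h j • W' j, s + h j) :
              EuclideanSpace ℝ (Fin n) × ℝ) ∈ spaceTimeTrack J T :=
            fun j => ⟨hWmem j, hsh j⟩
          have hzxne : ∀ j, z j - x = h j := fun j => by simp [hzdef]
          have hslopeτ : Tendsto (fun j => slope τ x (z j)) atTop (nhds (F (τ x) x)) := by
            have hds := hasDerivWithinAt_iff_tendsto_slope.mp (hderiv x hxIccT)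
            apply hds.comp
            rw [tendsto_nhdsWithin_iff]
            constructor
            · have : Tendsto z atTop (nhds (x + 0)) := tendsto_const_nhds.add hhlim
              simpa using this
            · exact Filter.Eventually.of_forall fun j => ⟨hzIcc j, by
                simp only [Set.mem_singleton_iff]
                exact (hzx j).ne'⟩
          set Q : ℕ → ℝ := fun j =>
            ‖slope τ x (z j) - F (τ x) x‖ + ((C:ℝ) * g x + ε/2) + ‖F v s - W' j‖ with hQdef
          have hQnn : ∀ j, 0 ≤ Q j := fun j => by
            have : (0:ℝ) ≤ (C:ℝ) * g x + ε/2 :=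
              add_nonneg (mul_nonneg C.coe_nonneg (hgnn x)) (by positivity)
            positivity
          have hQlim : Tendsto Q atTop (nhds ((C:ℝ) * g x + ε/2)) := by
            have ht1 : Tendsto (fun j => ‖slope τ x (z j) - F (τ x) x‖) atTop (nhds 0) := by
              have := (hslopeτ.sub (tendsto_const_nhds (x := F (τ x) x))).norm
              simpa using this
            have ht3 : Tendsto (fun j => ‖F v s - W' j‖) atTop (nhds 0) := by
              have := ((tendsto_const_nhds (x := F v s)).sub hW').norm
              simpa using this
            have := (ht1.add (tendsto_const_nhds (x := (C:ℝ) * g x + ε/2))).add ht3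
            simpa using this
          have hQev : ∀ᶠ j in atTop, Q j < r := by
            apply hQlim.eventually_lt_const
            rw [hfx] at hr; linarith
          obtain ⟨j, hQj⟩ := hQev.exists
          have hgz : g (z j) ≤ g x + h j * Q j := by
            have hb := hgle (z j) (v + h j • W' j) (s + h j) (hmemL j)
            apply le_trans hb
            apply max_le
            · have hsl : h j • slope τ x (z j) = τ (z j) - τ x := by
                rw [slope_def_module, ← hzxne j, smul_inv_smul₀ (by rw [hzxne j]; exact (hhpos j).ne')]
              have hid : τ (z j) - (v + h j • W' j) =
                  (τ x - v) + (h j • (slope τ x (z j) - F (τ x) x) +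
                  (h j • (F (τ x) x - F v s) + h j • (F v s - W' j))) := by
                rw [smul_sub, smul_sub, smul_sub, hsl]
                abel
              rw [hid]
              have hn1 : ‖h j • (slope τ x (z j) - F (τ x) x)‖ =
                  h j * ‖slope τ x (z j) - F (τ x) x‖ := by
                rw [norm_smul, Real.norm_eq_abs, abs_of_pos (hhpos j)]
              have hn2 : ‖h j • (F (τ x) x - F v s)‖ ≤ h j * ((C:ℝ) * g x + ε/2) := by
                rw [norm_smul, Real.norm_eq_abs, abs_of_pos (hhpos j)]
                exact mul_le_mul_of_nonneg_left hFdiff (hhpos j).le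
              have hn3 : ‖h j • (F v s - W' j)‖ = h j * ‖F v s - W' j‖ := by
                rw [norm_smul, Real.norm_eq_abs, abs_of_pos (hhpos j)]
              calc ‖(τ x - v) + (h j • (slope τ x (z j) - F (τ x) x) +
                  (h j • (F (τ x) x - F v s) + h j • (F v s - W' j)))‖
                  ≤ ‖τ x - v‖ + (‖h j • (slope τ x (z j) - F (τ x) x)‖ +
                    (‖h j • (F (τ x) x - F v s)‖ + ‖h j • (F v s - W' j)‖)) := by
                    refine le_trans (norm_add_le _ _) ?_
                    refine add_le_add_right ?_ _
                    refine le_trans (norm_add_le _ _) ?_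
                    refine add_le_add_right ?_ _
                    exact norm_add_le _ _
                _ ≤ g x + (h j * ‖slope τ x (z j) - F (τ x) x‖ +
                    (h j * ((C:ℝ) * g x + ε/2) + h j * ‖F v s - W' j‖)) := by
                    rw [hn1, hn3]
                    exact add_le_add h1 (add_le_add_right (add_le_add_left hn2 _) _)
                _ = g x + h j * Q j := by rw [hQdef]; ring
            · have he : z j - (s + h j) = x - s := by simp only [hzdef]; ring
              rw [he]
              calc lam * |x - s| ≤ g x := h2
              _ ≤ g x + h j * Q j := le_add_of_nonneg_right (mul_nonneg (hhpos j).le (hQnn j))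
          have hslopele : (z j - x)⁻¹ * (f (z j) - f x) ≤ Q j := by
            have hfz : f (z j) - f x ≤ h j * Q j := by
              have hmin : f (z j) ≤ g (z j) := min_le_left _ _
              rw [hfx]; linarith
            rw [hzxne j, inv_mul_le_iff₀ (hhpos j)]
            exact hfz
          have hge := hIoo ⟨hzx j, hzu j⟩
          simp only [Set.mem_setOf_eq, not_lt] at hge
          exact absurd hge (not_le.mpr (lt_of_le_of_lt hslopele hQj))
    have hbound : ∀ x ∈ Set.Ico m (m+δ₀), (C:ℝ) * f x + ε/2 ≤ (C:ℝ) * f x + ε := by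
      intro x _; linarith
    have hgron := le_gronwallBound_of_liminf_deriv_right_le hfcont hslope hfm hbound
    intro x hxmem
    have hfle : f x ≤ ε * Ψ := by
      have hg1 := hgron x hxmem
      have hg2 : gronwallBound 0 (C:ℝ) ε (x - m) ≤ ε * Ψ :=
        gronwallBound_le_mul C.coe_nonneg hε.le (by linarith [hxmem.1]) (by linarith [hxmem.2])
      linarith
    have hgx : g x ≤ η := by
      by_contra hlt
      push_neg at hlt
      have : f x = η := min_eq_right hlt.le
      linarith
    have hfxg : f x = g x := min_eq_left hgx
    obtain ⟨q, hqL, hq⟩ := hLsc_closed.exists_infDist_eq_dist hLsc_ne ((τ x, lam * x))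
    obtain ⟨p, hpL, rfl⟩ := hqL
    have hd1 : Metric.infDist ((τ x, x)) (spaceTimeTrack J T) ≤ dist ((τ x, x)) p :=
      Metric.infDist_le_dist_of_mem hpL
    have hd2 : dist (((τ x, x)) : EuclideanSpace ℝ (Fin n) × ℝ) p ≤
        dist ((τ x, lam * x)) (((p.1, lam * p.2)) : EuclideanSpace ℝ (Fin n) × ℝ) := by
      rw [Prod.dist_eq, Prod.dist_eq, hdist_eq, Real.dist_eq]
      exact max_le_max le_rfl (le_mul_of_one_le_left (abs_nonneg _) hlam1)
    have hgeq : g x = dist ((τ x, lam * x)) (((p.1, lam * p.2)) : EuclideanSpace ℝ (Fin n) × ℝ) :=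
      hq
    linarith
  refine ⟨δ₀, hδ₀pos, hmδt₂, ?_⟩
  intro t ht
  have hinf : Metric.infDist ((τ t, t)) (spaceTimeTrack J T) = 0 := by
    refine le_antisymm ?_ Metric.infDist_nonneg
    by_contra hpos
    push_neg at hpos
    set d := Metric.infDist ((τ t, t)) (spaceTimeTrack J T) with hd
    set ε := min (d/(2*Ψ)) (η/(2*Ψ)) with hεdef
    have hεpos : 0 < ε := lt_min (by positivity) (by positivity)
    have hεη : ε * Ψ < η := by
      have hm1 : ε ≤ η/(2*Ψ) := min_le_right _ _
      have hm2 : ε * Ψ ≤ η/(2*Ψ) * Ψ := mul_le_mul_of_nonneg_right hm1 hΨpos.le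
      have hm3 : η/(2*Ψ) * Ψ = η/2 := by field_simp
      linarith
    have hkey := key ε hεpos hεη t ht
    have h4 : ε * Ψ ≤ d/2 := by
      have hm1 : ε ≤ d/(2*Ψ) := min_le_left _ _
      have hm2 := mul_le_mul_of_nonneg_right hm1 hΨpos.le
      have hm3 : d/(2*Ψ) * Ψ = d/2 := by field_simp
      linarith
    linarith
  exact ((htrack.mem_iff_infDist_zero hLne).mpr hinf).1

lemma invariance {n : ℕ} {U : Set (EuclideanSpace ℝ (Fin n))} (hU : IsOpen U)
    {T : ℝ} {J B : ℝ → Set (EuclideanSpace ℝ (Fin n))}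
    (hJ : ∀ t ∈ Set.Icc (0 : ℝ) T,
      J t ⊆ U ∧ (J t).Nonempty ∧ IsClosed (J t) ∧ Convex ℝ (J t))
    (htrack : IsClosed (spaceTimeTrack J T))
    (hBtrack : IsClosed (spaceTimeTrack B T))
    {F : EuclideanSpace ℝ (Fin n) → ℝ → EuclideanSpace ℝ (Fin n)}
    (hFt : ∀ v ∈ U, ContinuousOn (fun t => F v t) (Set.Icc 0 T))
    {C : NNReal} (hFlip : ∀ t ∈ Set.Icc (0 : ℝ) T, LipschitzOnWith C (fun v => F v t) U)
    (hcone : ∀ v : EuclideanSpace ℝ (Fin n), ∀ t ∈ Set.Ico (0 : ℝ) T,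
      (v, t) ∈ frontier (spaceTimeTrack J T) \ spaceTimeTrack B T →
      inTimelikeTangentCone J v t (F v t))
    {t₀ t₂ : ℝ} (ht₀0 : 0 ≤ t₀) (ht₀₂ : t₀ ≤ t₂) (ht₂T : t₂ ≤ T)
    {τ : ℝ → EuclideanSpace ℝ (Fin n)} (hτU : ∀ t ∈ Set.Icc t₀ T, τ t ∈ U)
    (hderiv : ∀ t ∈ Set.Icc t₀ T, HasDerivWithinAt τ (F (τ t) t) (Set.Icc t₀ T) t)
    (hstart : τ t₀ ∈ J t₀)
    (havoid : ∀ t ∈ Set.Ico t₀ t₂, τ t ∉ B t) :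
    ∀ t ∈ Set.Icc t₀ t₂, τ t ∈ J t := by
  have hτcont : ContinuousOn τ (Set.Icc t₀ T) := fun t ht => (hderiv t ht).continuousWithinAt
  set S := {t ∈ Set.Icc t₀ t₂ | ∀ u ∈ Set.Icc t₀ t, τ u ∈ J u} with hSdef
  have ht₀S : t₀ ∈ S := ⟨⟨le_refl t₀, ht₀₂⟩, fun u hu => by
    have : u = t₀ := le_antisymm hu.2 hu.1
    rwa [this]⟩
  have hSne : S.Nonempty := ⟨t₀, ht₀S⟩
  have hSbdd : BddAbove S := ⟨t₂, fun t ht => ht.1.2⟩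
  set m := sSup S with hmdef
  have hmS1 : t₀ ≤ m := le_csSup hSbdd ht₀S
  have hmS2 : m ≤ t₂ := csSup_le hSne (fun t ht => ht.1.2)
  have hmT : m ≤ T := le_trans hmS2 ht₂T
  have hbelow : ∀ u ∈ Set.Ico t₀ m, τ u ∈ J u := by
    intro u hu
    obtain ⟨t, htS, hut⟩ := exists_lt_of_lt_csSup hSne hu.2
    exact htS.2 u ⟨hu.1, hut.le⟩
  have hmJ : τ m ∈ J m := by
    rcases eq_or_lt_of_le hmS1 with he | hlt
    · rwa [← he]
    · set w : ℕ → ℝ := fun k => m - (m - t₀)/((k:ℝ)+2) with hwdef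
      have hwIco : ∀ k, w k ∈ Set.Ico t₀ m := by
        intro k
        have hk : (1:ℝ) ≤ (k:ℝ)+2 := by
          have := Nat.cast_nonneg (α := ℝ) k; linarith
        have hd : (m - t₀)/((k:ℝ)+2) ≤ m - t₀ :=
          div_le_self (by linarith) hk
        have hdpos : 0 < (m - t₀)/((k:ℝ)+2) := by
          apply div_pos (by linarith) (by positivity)
        constructor
        · simp only [hwdef]; linarith
        · simp only [hwdef]; linarith
      have hwlim : Tendsto w atTop (nhds m) := by
        have := tendsto_const_nhds (x := m) (f := atTop (α := ℕ)) |>.sub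
          (tendsto_div_add_two (m - t₀))
        simpa using this
      have hmem : ∀ k, ((τ (w k), w k) : EuclideanSpace ℝ (Fin n) × ℝ) ∈ spaceTimeTrack J T :=
        fun k => ⟨hbelow (w k) (hwIco k),
          le_trans ht₀0 (hwIco k).1, le_trans (hwIco k).2.le hmT⟩
      have hτw : Tendsto (fun k => ((τ (w k), w k) : EuclideanSpace ℝ (Fin n) × ℝ)) atTop
          (nhds ((τ m, m))) := by
        apply Tendsto.prodMk_nhds ?_ hwlim
        have hcw : Tendsto w atTop (nhdsWithin m (Set.Icc t₀ T)) := by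
          rw [tendsto_nhdsWithin_iff]
          exact ⟨hwlim, Filter.Eventually.of_forall fun k =>
            ⟨(hwIco k).1, le_trans (hwIco k).2.le hmT⟩⟩
        exact (hτcont m ⟨hmS1, hmT⟩).tendsto.comp hcw
      exact (htrack.mem_of_tendsto hτw (Filter.Eventually.of_forall hmem)).1
  have hmS : m ∈ S := ⟨⟨hmS1, hmS2⟩, fun u hu => by
    rcases lt_or_eq_of_le hu.2 with h | h
    · exact hbelow u ⟨hu.1, h⟩
    · rwa [h]⟩
  rcases eq_or_lt_of_le hmS2 with heq | hlt
  · intro t ht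
    exact hmS.2 t ⟨ht.1, heq ▸ ht.2⟩
  · exfalso
    obtain ⟨δ, hδpos, hδt₂, hδJ⟩ := localStep hU hJ htrack hBtrack hFt hFlip hcone ht₀0 ht₂T
      hτU hderiv havoid hmS1 hlt hmJ
    have hmδS : m + δ ∈ S := by
      refine ⟨⟨by linarith, hδt₂.le⟩, fun u hu => ?_⟩
      rcases le_or_gt u m with h | h
      · exact hmS.2 u ⟨hu.1, h⟩
      · exact hδJ u ⟨h.le, hu.2⟩
    have := le_csSup hSbdd hmδS
    linarith


theorem stmt_12 (n : ℕ) (U : Set (EuclideanSpace ℝ (Fin n))) (hU : IsOpen U)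
    (T : ℝ) (hT : 0 < T)
    (J B : ℝ → Set (EuclideanSpace ℝ (Fin n)))
    (hJ : ∀ t ∈ Set.Icc (0 : ℝ) T,
      J t ⊆ U ∧ (J t).Nonempty ∧ IsClosed (J t) ∧ Convex ℝ (J t))
    (hBJ : ∀ t ∈ Set.Icc (0 : ℝ) T, B t ⊆ J t)
    (htrack : IsClosed (spaceTimeTrack J T))
    (hBtrack : IsClosed (spaceTimeTrack B T))
    (F : EuclideanSpace ℝ (Fin n) → ℝ → EuclideanSpace ℝ (Fin n))
    (hFt : ∀ v ∈ U, ContinuousOn (fun t => F v t) (Set.Icc 0 T))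
    (hFlip : ∃ C : NNReal, ∀ t ∈ Set.Icc (0 : ℝ) T, LipschitzOnWith C (fun v => F v t) U)
    (hcone : ∀ v : EuclideanSpace ℝ (Fin n), ∀ t ∈ Set.Ico (0 : ℝ) T,
      (v, t) ∈ frontier (spaceTimeTrack J T) \ spaceTimeTrack B T →
      inTimelikeTangentCone J v t (F v t)) :
    ∀ t₀ ∈ Set.Ico (0 : ℝ) T, ∀ τ : ℝ → EuclideanSpace ℝ (Fin n),
      (∀ t ∈ Set.Icc t₀ T, τ t ∈ U) →
      (∀ t ∈ Set.Icc t₀ T, HasDerivWithinAt τ (F (τ t) t) (Set.Icc t₀ T) t) →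
      τ t₀ ∈ J t₀ \ B t₀ →
      (∀ t ∈ Set.Icc t₀ T, τ t ∈ J t) ∨
        ∃ t₁ ∈ Set.Ioc t₀ T,
          (∀ t ∈ Set.Ico t₀ t₁, τ t ∈ J t \ B t) ∧ τ t₁ ∈ B t₁ := by
  intro t₀ ht₀ τ hτU hderiv hstart
  obtain ⟨C, hFlip⟩ := hFlip
  have ht₀0 : (0:ℝ) ≤ t₀ := ht₀.1
  have ht₀T : t₀ ≤ T := ht₀.2.le
  have hτcont : ContinuousOn τ (Set.Icc t₀ T) := fun t ht => (hderiv t ht).continuousWithinAt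
  set A := {t ∈ Set.Icc t₀ T | τ t ∈ B t} with hAdef
  have hAclosed : IsClosed A := by
    have heq : A = Set.Icc t₀ T ∩
        (fun t => ((τ t, t) : EuclideanSpace ℝ (Fin n) × ℝ)) ⁻¹' (spaceTimeTrack B T) := by
      ext t
      constructor
      · rintro ⟨ht, hB⟩
        exact ⟨ht, hB, le_trans ht₀0 ht.1, ht.2⟩
      · rintro ⟨ht, hB, _⟩
        exact ⟨ht, hB⟩
    rw [heq]
    exact (hτcont.prodMk continuousOn_id).preimage_isClosed_of_isClosed isClosed_Icc hBtrack
  by_cases hAne : A.Nonempty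
  · right
    have hbdd : BddBelow A := ⟨t₀, fun t ht => ht.1.1⟩
    set t₁ := sInf A with ht₁def
    have ht₁A : t₁ ∈ A := hAclosed.csInf_mem hAne hbdd
    have ht₁0 : t₀ ≤ t₁ := ht₁A.1.1
    have ht₁T : t₁ ≤ T := ht₁A.1.2
    have ht₁gt : t₀ < t₁ := by
      rcases eq_or_lt_of_le ht₁0 with h | h
      · exact absurd (h ▸ ht₁A.2) hstart.2
      · exact h
    have havoid : ∀ t ∈ Set.Ico t₀ t₁, τ t ∉ B t := by
      intro t ht hBt
      have : t₁ ≤ t := csInf_le hbdd ⟨⟨ht.1, le_trans ht.2.le ht₁T⟩, hBt⟩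
      exact absurd this (not_le.mpr ht.2)
    have hJall := invariance hU hJ htrack hBtrack hFt hFlip hcone ht₀0 ht₁gt.le ht₁T
      hτU hderiv hstart.1 havoid
    exact ⟨t₁, ⟨ht₁gt, ht₁T⟩, fun t ht => ⟨hJall t ⟨ht.1, ht.2.le⟩, havoid t ht⟩, ht₁A.2⟩
  · left
    rw [Set.not_nonempty_iff_eq_empty] at hAne
    have havoid : ∀ t ∈ Set.Ico t₀ T, τ t ∉ B t := by
      intro t ht hBt
      have : t ∈ A := ⟨⟨ht.1, ht.2.le⟩, hBt⟩
      rw [hAne] at this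
      exact this
    exact invariance hU hJ htrack hBtrack hFt hFlip hcone ht₀0 ht₀T le_rfl
      hτU hderiv hstart.1 havoid
end
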